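/- arXiv:2008.00650 — 5 statements merged into one kernel-verified Lean document; each statement's English description precedes it below -/
import Mathlib

section
/- The language U over the alphabet {[, ], ⋆, ♯} is recognized by a deterministic order-2 collapsible pushdown automaton. -/
namespace HOPDA

/-- Iterated exponentiation `pow` from the paper:
`pow [] = 1`, `pow (m :: l) = (1 + m) ^ pow l - 1`. -/
def pow : List ℕ → ℕ
  | [] => 1
  | m :: l => (1 + m) ^ pow l - 1

/-! ### Higher-order stacks.

Stacks are represented positionlessly (nested lists of symbols); the positions of the
paper are represented by *addresses*: lists of bottom-based indices leading from the
outermost level into the stack.  Equality of contents is positionless equality `≅`. -/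

inductive St (Γ : Type) : Type where
  | leaf (γ : Γ) : St Γ
  | node (l : List (St Γ)) : St Γ

/-- `IsValid k s` : `s` is a stack of order `k` all of whose component stacks are nonempty. -/
def IsValid {Γ : Type} : ℕ → St Γ → Prop
  | 0, St.leaf _ => True
  | 0, St.node _ => False
  | _ + 1, St.leaf _ => False
  | k + 1, St.node l => l ≠ [] ∧ ∀ t ∈ l, IsValid k t

/-- The address of the topmost substack `d` levels below the surface
(indices count from the bottom of each stack, as the positions in the paper do). -/
def topAddr {Γ : Type} : St Γ → ℕ → List ℕ
  | _, 0 => []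
  | St.leaf _, _ + 1 => []
  | St.node l, d + 1 => (l.length - 1) :: topAddr (l.getLastD (St.node [])) d

/-- The substack sitting at a given address. -/
def sub? {Γ : Type} : St Γ → List ℕ → Option (St Γ)
  | s, [] => some s
  | St.leaf _, _ :: _ => none
  | St.node l, i :: p =>
      match l[i]? with
      | some t => sub? t p
      | none => none

/-- Modify the substack at a given address. -/
def modAt {Γ : Type} : St Γ → List ℕ → (St Γ → Option (St Γ)) → Option (St Γ)
  | s, [], f => f s
  | St.leaf _, _ :: _, _ => none
  | St.node l, i :: p, f =>
      match l[i]? with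
      | none => none
      | some t =>
          match modAt t p f with
          | none => none
          | some t' => some (St.node (l.set i t'))

/-- The topmost stack symbol of an order-`n` stack. -/
def topLeaf? {Γ : Type} (n : ℕ) (s : St Γ) : Option Γ :=
  match sub? s (topAddr s n) with
  | some (St.leaf γ) => some γ
  | _ => none

/-- The content of the topmost `k`-stack of an order-`n` stack (`top^k`);
equality of these contents is positionless equality `≅` of topmost `k`-stacks. -/
def topStk {Γ : Type} (n : ℕ) (s : St Γ) (k : ℕ) : Option (St Γ) :=
  sub? s (topAddr s (n - k))

/-- Number of components of the (composite) stack at the given address. -/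
def sizeAt {Γ : Type} (s : St Γ) (p : List ℕ) : ℕ :=
  match sub? s p with
  | some (St.node l) => l.length
  | _ => 0

/-- Remove the topmost component of a composite stack
(defined only when it has at least two components). -/
def popStk {Γ : Type} : St Γ → Option (St Γ)
  | St.node l => if 2 ≤ l.length then some (St.node l.dropLast) else none
  | St.leaf _ => none

/-- Duplicate the topmost `(r-1)`-stack of an `r`-stack,
replacing the topmost symbol of the new copy by `γ`. -/
def dupTop {Γ : Type} (r : ℕ) (γ : Γ) : St Γ → Option (St Γ)
  | St.node l =>
      match l.getLast? with
      | none => none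
      | some t =>
          match modAt t (topAddr t (r - 1)) (fun u =>
            match u with
            | St.leaf _ => some (St.leaf γ)
            | St.node _ => none) with
          | none => none
          | some t' => some (St.node (l ++ [t']))
  | St.leaf _ => none

/-- `push^r_γ` on an order-`n` stack. -/
def pushOp {Γ : Type} (n r : ℕ) (γ : Γ) (s : St Γ) : Option (St Γ) :=
  modAt s (topAddr s (n - r)) (dupTop r γ)

/-- `pop^r` on an order-`n` stack. -/
def popOp {Γ : Type} (n r : ℕ) (s : St Γ) : Option (St Γ) :=
  modAt s (topAddr s (n - r)) popStk

/-- Stack operations of an order-`n` pushdown automaton. -/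
inductive Op (Γ : Type) where
  | pop (k : ℕ)
  | push (k : ℕ) (γ : Γ)

def applyOp {Γ : Type} (n : ℕ) : Op Γ → St Γ → Option (St Γ)
  | Op.pop k, s => if 1 ≤ k ∧ k ≤ n then popOp n k s else none
  | Op.push k γ, s => if 1 ≤ k ∧ k ≤ n then pushOp n k γ s else none

/-- The one-step history function on addresses: for the address of a substack of
`op(s)` it returns the address of the substack of `s` from which it originates. -/
def histStep {Γ : Type} (n : ℕ) : Op Γ → St Γ → List ℕ → List ℕ
  | Op.pop _, _, p => p
  | Op.push r _, s, p =>
      let m := n - r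
      let ta := topAddr s m
      let sz := sizeAt s ta
      if p.take (m + 1) = ta ++ [sz] then p.set m (sz - 1) else p

/-! ### Deterministic order-`n` pushdown automata -/

inductive Trans (A Γ Q : Type) where
  | read (f : A → Q)
  | op (q : Q) (o : Op Γ)

/-- A deterministic order-`n` pushdown automaton. -/
structure DPDA (n : ℕ) (A Γ : Type) where
  Q : Type
  finQ : Finite Q
  qI : Q
  γI : Γ
  F : Set Q
  δ : Q → Γ → Trans A Γ Q
  read_inj : ∀ q γ f, δ q γ = Trans.read f → Function.Injective f

/-- One step of an `n`-DPDA; the label records the letter read (if any). -/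
inductive Step {n : ℕ} {A Γ : Type} (D : DPDA n A Γ) :
    D.Q × St Γ → Option A → D.Q × St Γ → Prop where
  | read {q : D.Q} {s : St Γ} {γ : Γ} {f : A → D.Q} (a : A) :
      IsValid n s → topLeaf? n s = some γ → D.δ q γ = Trans.read f →
      Step D (q, s) (some a) (f a, s)
  | op {q : D.Q} {s s' : St Γ} {γ : Γ} {q' : D.Q} {o : Op Γ} :
      IsValid n s → topLeaf? n s = some γ → D.δ q γ = Trans.op q' o →
      applyOp n o s = some s' →
      Step D (q, s) none (q', s')

/-- A (finite) run `R(0), …, R(len)` of an `n`-DPDA. -/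
structure Run {n : ℕ} {A Γ : Type} (D : DPDA n A Γ) where
  len : ℕ
  cfg : ℕ → D.Q × St Γ
  lab : ℕ → Option A
  ok : ∀ i < len, Step D (cfg i) (lab i) (cfg (i + 1))

namespace Run

variable {n : ℕ} {A Γ : Type} {D : DPDA n A Γ}

/-- The word read by a run. -/
def word (R : Run D) : List A := (List.range R.len).filterMap R.lab

/-- The subrun `R[i,j]`. -/
def sub (R : Run D) (i j : ℕ) : Run D where
  len := min j R.len - i
  cfg := fun t => R.cfg (i + t)
  lab := fun t => R.lab (i + t)
  ok := fun t ht => R.ok (i + t) (by omega)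

/-- The history function of the single step starting at position `j` of the run. -/
def stepHist (R : Run D) (j : ℕ) : List ℕ → List ℕ :=
  match topLeaf? n (R.cfg j).2 with
  | none => id
  | some γ =>
      match D.δ (R.cfg j).1 γ with
      | Trans.read _ => id
      | Trans.op _ o => histStep n o (R.cfg j).2

/-- `histTo R i j p` : the address in `R(i)` of the origin (history) of the substack
of `R(j)` sitting at address `p` (meaningful for `i ≤ j ≤ R.len`). -/
def histTo (R : Run D) (i : ℕ) : ℕ → List ℕ → List ℕ
  | 0, p => p
  | j + 1, p => if j + 1 ≤ i then p else histTo R i j (stepHist R j p)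

/-- A run is `k`-upper when the topmost `k`-stack at its end originates from
the topmost `k`-stack at its start. -/
def IsUpper (R : Run D) (k : ℕ) : Prop :=
  histTo R 0 R.len (topAddr (R.cfg R.len).2 (n - k)) = topAddr (R.cfg 0).2 (n - k)

/-- A run is a `k`-return when the topmost `(k-1)`-stack at its end originates from the
topmost `(k-1)`-stack of `pop^k` of its starting stack, and no suffix is `(k-1)`-upper. -/
def IsReturn (R : Run D) (k : ℕ) : Prop :=
  (histTo R 0 R.len (topAddr (R.cfg R.len).2 (n - (k - 1))) =
    topAddr (R.cfg 0).2 (n - k) ++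
      [sizeAt (R.cfg 0).2 (topAddr (R.cfg 0).2 (n - k)) - 2]) ∧
  ∀ i < R.len, ¬ (R.sub i R.len).IsUpper (k - 1)

end Run

/-- `R` is the composition `S ∘ T` of the runs `S` and `T`. -/
def IsComp {n : ℕ} {A Γ : Type} {D : DPDA n A Γ} (R S T : Run D) : Prop :=
  S.cfg S.len = T.cfg 0 ∧ R.len = S.len + T.len ∧
  (∀ i ≤ S.len, R.cfg i = S.cfg i) ∧ (∀ i < S.len, R.lab i = S.lab i) ∧
  (∀ i ≤ T.len, R.cfg (S.len + i) = T.cfg i) ∧ (∀ i < T.len, R.lab (S.len + i) = T.lab i)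

/-- `Decomp R k r c` : `c 0 < c 1 < … < c r` are the cut points of the (unique)
decomposition of the `k`-upper run `R` into the maximal number of nonempty
`k`-upper runs. -/
def Decomp {n : ℕ} {A Γ : Type} {D : DPDA n A Γ} (R : Run D) (k r : ℕ) (c : ℕ → ℕ) : Prop :=
  c 0 = 0 ∧ c r = R.len ∧ (∀ j < r, c j < c (j + 1)) ∧ (∀ j ≤ r, c j ≤ R.len) ∧
  (∀ j < r, (R.sub (c j) (c (j + 1))).IsUpper k) ∧
  (∀ j < r, ∀ i, c j < i → i < c (j + 1) → ¬ (R.sub i (c (j + 1))).IsUpper k)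

/-- The image under the morphism generated by `φ` of a word. -/
def phiW {A M : Type} [Monoid M] (φ : A → M) (w : List A) : M := (w.map φ).prod

/-- The two `k`-upper runs `R` and `S` are `(k,φ)`-parallel. -/
def Parallel {n : ℕ} {A Γ M : Type} [Monoid M] {D : DPDA n A Γ}
    (φ : A → M) (R S : Run D) (k : ℕ) : Prop :=
  R.IsUpper k ∧ S.IsUpper k ∧
  topStk n (R.cfg R.len).2 k = topStk n (S.cfg S.len).2 k ∧
  ∃ (r : ℕ) (cR cS : ℕ → ℕ), Decomp R k r cR ∧ Decomp S k r cS ∧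
    ∀ j < r,
      phiW φ (R.sub (cR j) (cR (j + 1))).word = phiW φ (S.sub (cS j) (cS (j + 1))).word ∧
      topStk n (R.cfg (cR j)).2 k = topStk n (S.cfg (cS j)).2 k

/-- An infinite run of an `n`-DPDA. -/
structure InfRun {n : ℕ} {A Γ : Type} (D : DPDA n A Γ) where
  cfg : ℕ → D.Q × St Γ
  lab : ℕ → Option A
  ok : ∀ i, Step D (cfg i) (lab i) (cfg (i + 1))

/-- The finite subrun `R[i,j]` of an infinite run. -/
def InfRun.sub {n : ℕ} {A Γ : Type} {D : DPDA n A Γ} (R : InfRun D) (i j : ℕ) : Run D where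
  len := j - i
  cfg := fun t => R.cfg (i + t)
  lab := fun t => R.lab (i + t)
  ok := fun t _ => R.ok (i + t)

/-- A step label reads nothing, or reads the `star` symbol. -/
def OnlyStar {A : Type} (star : A) (o : Option A) : Prop := o = none ∨ o = some star

/-- Milestone configurations. -/
def Milestone {n : ℕ} {A Γ : Type} {D : DPDA n A Γ} (star : A) (c : D.Q × St Γ) : Prop :=
  ∃ R : InfRun D, R.cfg 0 = c ∧ (∀ i, OnlyStar star (R.lab i)) ∧
    ∃ I : Set ℕ, I.Infinite ∧ 0 ∈ I ∧ ∀ i ∈ I, ∀ j ∈ I, i ≤ j → (R.sub i j).IsUpper 0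

/-- The initial order-`n` stack, containing the single symbol `γ`. -/
def initStack (n : ℕ) {Γ : Type} (γ : Γ) : St Γ :=
  Nat.rec (motive := fun _ => St Γ) (St.leaf γ) (fun _ s => St.node [s]) n

def initCfg {n : ℕ} {A Γ : Type} (D : DPDA n A Γ) : D.Q × St Γ := (D.qI, initStack n D.γI)

/-- The language recognized by an `n`-DPDA. -/
def Lang {n : ℕ} {A Γ : Type} (D : DPDA n A Γ) : Set (List A) :=
  { w | ∃ R : Run D, R.cfg 0 = initCfg D ∧ R.word = w ∧ (R.cfg R.len).1 ∈ D.F }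

/-! ### Deterministic order-2 collapsible pushdown automata -/

/-- Stack operations of an order-2 collapsible pushdown automaton. -/
inductive COp (Γ : Type) where
  | pop1
  | pop2
  | push1 (γ : Γ)
  | push2 (γ : Γ)
  | collapse

/-- An order-2 collapsible stack: a list of 1-stacks (topmost first), each a list of
0-stacks (topmost first) storing a symbol and the collapse link (a natural number). -/
abbrev CStk (Γ : Type) := List (List (Γ × ℕ))

/-- Semantics of the order-2 collapsible stack operations. -/
def capply {Γ : Type} : COp Γ → CStk Γ → Option (CStk Γ)
  | COp.pop1, (_ :: x :: t) :: rest => some ((x :: t) :: rest)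
  | COp.pop1, _ => none
  | COp.pop2, _ :: s :: rest => some (s :: rest)
  | COp.pop2, _ => none
  | COp.push1 γ, (x :: t) :: rest => some (((γ, rest.length + 1) :: x :: t) :: rest)
  | COp.push1 _, _ => none
  | COp.push2 γ, ((x, m) :: t) :: rest => some (((γ, m) :: t) :: ((x, m) :: t) :: rest)
  | COp.push2 _, _ => none
  | COp.collapse, ((x, m) :: t) :: rest =>
      if 1 ≤ m - 1 ∧ m - 1 ≤ rest.length + 1 then
        some ((((x, m) :: t) :: rest).drop (rest.length + 1 - (m - 1)))
      else none
  | COp.collapse, _ => none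

/-- The topmost stack symbol of an order-2 collapsible stack. -/
def ctop? {Γ : Type} : CStk Γ → Option Γ
  | ((γ, _) :: _) :: _ => some γ
  | _ => none

inductive CTrans (A Γ Q : Type) where
  | read (f : A → Q)
  | op (q : Q) (o : COp Γ)

/-- A deterministic order-2 collapsible pushdown automaton. -/
structure CPDA2 (A Γ : Type) where
  Q : Type
  finQ : Finite Q
  qI : Q
  γI : Γ
  F : Set Q
  δ : Q → Γ → CTrans A Γ Q
  read_inj : ∀ q γ f, δ q γ = CTrans.read f → Function.Injective f

inductive CStep {A Γ : Type} (D : CPDA2 A Γ) :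
    D.Q × CStk Γ → Option A → D.Q × CStk Γ → Prop where
  | read {q : D.Q} {s : CStk Γ} {γ : Γ} {f : A → D.Q} (a : A) :
      ctop? s = some γ → D.δ q γ = CTrans.read f → CStep D (q, s) (some a) (f a, s)
  | op {q : D.Q} {s s' : CStk Γ} {γ : Γ} {q' : D.Q} {o : COp Γ} :
      ctop? s = some γ → D.δ q γ = CTrans.op q' o → capply o s = some s' →
      CStep D (q, s) none (q', s')

structure CRun {A Γ : Type} (D : CPDA2 A Γ) where
  len : ℕ
  cfg : ℕ → D.Q × CStk Γ
  lab : ℕ → Option A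
  ok : ∀ i < len, CStep D (cfg i) (lab i) (cfg (i + 1))

def CRun.word {A Γ : Type} {D : CPDA2 A Γ} (R : CRun D) : List A :=
  (List.range R.len).filterMap R.lab

def cinitCfg {A Γ : Type} (D : CPDA2 A Γ) : D.Q × CStk Γ := (D.qI, [[(D.γI, 1)]])

/-- The language recognized by a 2-DCPDA. -/
def CLang {A Γ : Type} (D : CPDA2 A Γ) : Set (List A) :=
  { w | ∃ R : CRun D, R.cfg 0 = cinitCfg D ∧ R.word = w ∧ (R.cfg R.len).1 ∈ D.F }

/-! ### The alphabet `{[, ], ⋆, ♯}`, the function `stars`, and the language `U` -/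

inductive Alph : Type where
  | lb    -- the opening bracket [
  | rb    -- the closing bracket ]
  | star  -- ⋆
  | sharp -- ♯
  deriving DecidableEq

instance instFintypeAlph : Fintype Alph :=
  ⟨{Alph.lb, Alph.rb, Alph.star, Alph.sharp}, fun x => by cases x <;> simp⟩

/-- Processes a word over `{[, ], ⋆}`, keeping the total number of stars read so far and,
for each currently unmatched opening bracket (most recent first), the number of stars
read before it; returns `none` iff some prefix has more `]` than `[`. -/
def starsAux : List Alph → ℕ → List ℕ → Option (List ℕ)
  | [], _, st => some st
  | Alph.star :: w, cnt, st => starsAux w (cnt + 1) st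
  | Alph.lb :: w, cnt, st => starsAux w cnt (cnt :: st)
  | Alph.rb :: w, cnt, st =>
      match st with
      | [] => none
      | _ :: st' => starsAux w cnt st'
  | Alph.sharp :: _, _, _ => none

/-- `stars w` : `0` if some prefix of `w` has more closing than opening brackets, or if
`w` has equally many opening and closing brackets; otherwise the number of `⋆`s in `w`
before the last opening bracket of `w` not matched by a closing bracket. -/
def stars (w : List Alph) : ℕ :=
  match starsAux w 0 [] with
  | some (c :: _) => c
  | _ => 0

/-- The language `U = { w ♯^(stars(w)+1) | w ∈ {[, ], ⋆}* }`. -/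
def U : Set (List Alph) :=
  { u | ∃ w : List Alph, Alph.sharp ∉ w ∧ u = w ++ List.replicate (stars w + 1) Alph.sharp }

/-! ### Tree-generating pushdown systems -/

inductive TTrans (A Γ Q : Type) where
  | branch (a : A) (next : ℕ → Q)
  | op (q : Q) (o : Op Γ)

/-- A deterministic tree-generating order-`n` pushdown system (without collapse)
over the ranked alphabet `(A, rank)`. -/
structure TreePDA (n : ℕ) (A Γ : Type) (rank : A → ℕ) where
  Q : Type
  finQ : Finite Q
  qI : Q
  γI : Γ
  δ : Q → Γ → TTrans A Γ Q
  branch_inj : ∀ q γ a next, δ q γ = TTrans.branch a next →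
      ∀ i j, i < rank a → j < rank a → next i = next j → i = j

/-- One step of a tree-generating `n`-PDS; the label records the child chosen
at a branch step (if any). -/
inductive TStep {n : ℕ} {A Γ : Type} {rank : A → ℕ} (D : TreePDA n A Γ rank) :
    D.Q × St Γ → Option ℕ → D.Q × St Γ → Prop where
  | branch {q : D.Q} {s : St Γ} {γ : Γ} {a : A} {next : ℕ → D.Q} {i : ℕ} :
      IsValid n s → topLeaf? n s = some γ → D.δ q γ = TTrans.branch a next → i < rank a →
      TStep D (q, s) (some i) (next i, s)
  | op {q : D.Q} {s s' : St Γ} {γ : Γ} {q' : D.Q} {o : Op Γ} :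
      IsValid n s → topLeaf? n s = some γ → D.δ q γ = TTrans.op q' o →
      applyOp n o s = some s' →
      TStep D (q, s) none (q', s')

def TReach {n : ℕ} {A Γ : Type} {rank : A → ℕ} (D : TreePDA n A Γ rank) :
    D.Q × St Γ → D.Q × St Γ → Prop :=
  Relation.ReflTransGen (fun c c' => ∃ o, TStep D c o c')

def TOpReach {n : ℕ} {A Γ : Type} {rank : A → ℕ} (D : TreePDA n A Γ rank) :
    D.Q × St Γ → D.Q × St Γ → Prop :=
  Relation.ReflTransGen (fun c c' => TStep D c none c')

/-- `c` is a configuration at which a `branch(a,…)` transition applies. -/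
def TIsBr {n : ℕ} {A Γ : Type} {rank : A → ℕ} (D : TreePDA n A Γ rank)
    (c : D.Q × St Γ) (a : A) : Prop :=
  ∃ γ next, IsValid n c.2 ∧ topLeaf? n c.2 = some γ ∧ D.δ c.1 γ = TTrans.branch a next

/-- `TFollow D c p c'` : starting from the branch configuration `c` and following
the child choices `p` (each branch step being followed by op steps up to the next
branch configuration) one arrives at the branch configuration `c'`. -/
inductive TFollow {n : ℕ} {A Γ : Type} {rank : A → ℕ} (D : TreePDA n A Γ rank) :
    D.Q × St Γ → List ℕ → D.Q × St Γ → Prop where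
  | nil (c : D.Q × St Γ) : TFollow D c [] c
  | cons {c c₁ c₂ c₃ : D.Q × St Γ} {i : ℕ} {p : List ℕ} :
      TStep D c (some i) c₁ → TOpReach D c₁ c₂ → (∃ a, TIsBr D c₂ a) →
      TFollow D c₂ p c₃ → TFollow D c (i :: p) c₃

def tinitCfg {n : ℕ} {A Γ : Type} {rank : A → ℕ} (D : TreePDA n A Γ rank) : D.Q × St Γ :=
  (D.qI, initStack n D.γI)

/-- `D` generates the ranked tree whose labelling function is `t`
(`t p = some a` iff the node at position `p` exists and is labelled `a`). -/
def TGenerates {n : ℕ} {A Γ : Type} {rank : A → ℕ} (D : TreePDA n A Γ rank)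
    (t : List ℕ → Option A) : Prop :=
  (∀ c, TReach D (tinitCfg D) c → ∃ c' a, TReach D c c' ∧ TIsBr D c' a) ∧
  ∃ c₀, TOpReach D (tinitCfg D) c₀ ∧ (∃ a, TIsBr D c₀ a) ∧
    ∀ p a, t p = some a ↔ ∃ c, TFollow D c₀ p c ∧ TIsBr D c a

/-! ### Tree-generating order-2 collapsible pushdown systems -/

inductive CTTrans (A Γ Q : Type) where
  | branch (a : A) (next : ℕ → Q)
  | op (q : Q) (o : COp Γ)

structure CTreePDA (A Γ : Type) (rank : A → ℕ) where
  Q : Type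
  finQ : Finite Q
  qI : Q
  γI : Γ
  δ : Q → Γ → CTTrans A Γ Q
  branch_inj : ∀ q γ a next, δ q γ = CTTrans.branch a next →
      ∀ i j, i < rank a → j < rank a → next i = next j → i = j

inductive CTStep {A Γ : Type} {rank : A → ℕ} (D : CTreePDA A Γ rank) :
    D.Q × CStk Γ → Option ℕ → D.Q × CStk Γ → Prop where
  | branch {q : D.Q} {s : CStk Γ} {γ : Γ} {a : A} {next : ℕ → D.Q} {i : ℕ} :
      ctop? s = some γ → D.δ q γ = CTTrans.branch a next → i < rank a →
      CTStep D (q, s) (some i) (next i, s)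
  | op {q : D.Q} {s s' : CStk Γ} {γ : Γ} {q' : D.Q} {o : COp Γ} :
      ctop? s = some γ → D.δ q γ = CTTrans.op q' o → capply o s = some s' →
      CTStep D (q, s) none (q', s')

def CTReach {A Γ : Type} {rank : A → ℕ} (D : CTreePDA A Γ rank) :
    D.Q × CStk Γ → D.Q × CStk Γ → Prop :=
  Relation.ReflTransGen (fun c c' => ∃ o, CTStep D c o c')

def CTOpReach {A Γ : Type} {rank : A → ℕ} (D : CTreePDA A Γ rank) :
    D.Q × CStk Γ → D.Q × CStk Γ → Prop :=
  Relation.ReflTransGen (fun c c' => CTStep D c none c')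

def CTIsBr {A Γ : Type} {rank : A → ℕ} (D : CTreePDA A Γ rank)
    (c : D.Q × CStk Γ) (a : A) : Prop :=
  ∃ γ next, ctop? c.2 = some γ ∧ D.δ c.1 γ = CTTrans.branch a next

inductive CTFollow {A Γ : Type} {rank : A → ℕ} (D : CTreePDA A Γ rank) :
    D.Q × CStk Γ → List ℕ → D.Q × CStk Γ → Prop where
  | nil (c : D.Q × CStk Γ) : CTFollow D c [] c
  | cons {c c₁ c₂ c₃ : D.Q × CStk Γ} {i : ℕ} {p : List ℕ} :
      CTStep D c (some i) c₁ → CTOpReach D c₁ c₂ → (∃ a, CTIsBr D c₂ a) →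
      CTFollow D c₂ p c₃ → CTFollow D c (i :: p) c₃

def ctinitCfg {A Γ : Type} {rank : A → ℕ} (D : CTreePDA A Γ rank) : D.Q × CStk Γ :=
  (D.qI, [[(D.γI, 1)]])

/-- The order-2 collapsible pushdown system `D` generates the ranked tree whose
labelling function is `t`. -/
def CTGenerates {A Γ : Type} {rank : A → ℕ} (D : CTreePDA A Γ rank)
    (t : List ℕ → Option A) : Prop :=
  (∀ c, CTReach D (ctinitCfg D) c → ∃ c' a, CTReach D c c' ∧ CTIsBr D c' a) ∧
  ∃ c₀, CTOpReach D (ctinitCfg D) c₀ ∧ (∃ a, CTIsBr D c₀ a) ∧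
    ∀ p a, t p = some a ↔ ∃ c, CTFollow D c₀ p c ∧ CTIsBr D c a

/-!
The automaton keeps one symbol `b` per unmatched `[` in its topmost 1-stack, and on each `⋆`
leaves a copy of that 1-stack behind as a junk 1-stack, so the number of junk 1-stacks counts
the stars read so far and the collapse link that `push¹` stores in a `b` remembers how many
stars preceded its bracket. At the first `♯`, collapsing on the topmost `b` (the last unmatched
`[`) leaves exactly `stars w` junk 1-stacks above the bottom one; the automaton then pops them,
reading one `♯` each, and accepts. With no bracket open it accepts after one `♯`, and after an
unmatched `]` it skips the rest of `w` and accepts after one `♯`.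

That every word of `U` is accepted is a simulation of the run on it; the converse is an
invariant describing every configuration reachable on a given input.
-/

section

variable {A Γ : Type} {D : CPDA2 A Γ}

def CRun.cons (c : D.Q × CStk Γ) (o : Option A) (R : CRun D) (h : CStep D c o (R.cfg 0)) :
    CRun D where
  len := R.len + 1
  cfg | 0 => c | i + 1 => R.cfg i
  lab | 0 => o | i + 1 => R.lab i
  ok
    | 0, _ => h
    | i + 1, hi => R.ok i (by omega)

theorem CRun.word_cons (c : D.Q × CStk Γ) (o : Option A) (R : CRun D)
    (h : CStep D c o (R.cfg 0)) : (R.cons c o h).word = o.toList ++ R.word := by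
  cases o <;> simp [CRun.word, CRun.cons, List.range_succ_eq_map, List.filterMap_map]

theorem CStep.eq_of_δ_eq_op {q q' : D.Q} {s : CStk Γ} {o : COp Γ} {l : Option A}
    {c' : D.Q × CStk Γ} (h : CStep D (q, s) l c')
    (hδ : ∀ γ, ctop? s = some γ → D.δ q γ = .op q' o) :
    l = none ∧ ∃ s', capply o s = some s' ∧ c' = (q', s') := by
  cases h with
  | read _ hs h => simp [hδ _ hs] at h
  | op hs h ho => rw [hδ _ hs] at h; cases h; exact ⟨rfl, _, ho, rfl⟩

theorem CStep.eq_of_δ_eq_read {q : D.Q} {s : CStk Γ} {f : A → D.Q} {l : Option A}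
    {c' : D.Q × CStk Γ} (h : CStep D (q, s) l c')
    (hδ : ∀ γ, ctop? s = some γ → D.δ q γ = .read f) :
    ∃ a, l = some a ∧ c' = (f a, s) := by
  cases h with
  | read a hs h => rw [hδ _ hs] at h; cases h; exact ⟨a, rfl, rfl⟩
  | op hs h _ => simp [hδ _ hs] at h

end

namespace CPDA2

variable {A Γ : Type} (D : CPDA2 A Γ)

inductive Reach : D.Q × CStk Γ → List A → D.Q × CStk Γ → Prop where
  | refl (c : D.Q × CStk Γ) : Reach c [] c
  | step {c c₁ c₂ : D.Q × CStk Γ} {o : Option A} {u : List A} :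
      CStep D c o c₁ → Reach c₁ u c₂ → Reach c (o.toList ++ u) c₂

variable {D}

namespace Reach

theorem single {c c' : D.Q × CStk Γ} {o : Option A} (h : CStep D c o c') :
    D.Reach c o.toList c' := by
  simpa using step h (refl c')

theorem trans {c₁ c₂ c₃ : D.Q × CStk Γ} {u v : List A} (h₁ : D.Reach c₁ u c₂)
    (h₂ : D.Reach c₂ v c₃) : D.Reach c₁ (u ++ v) c₃ := by
  induction h₁ with
  | refl => exact h₂
  | step hs _ ih => simpa using step hs (ih h₂)

theorem read {q : D.Q} {s : CStk Γ} {γ : Γ} {f : A → D.Q} {a : A} {u : List A}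
    {c : D.Q × CStk Γ} (hs : ctop? s = some γ) (hδ : D.δ q γ = .read f)
    (h : D.Reach (f a, s) u c) : D.Reach (q, s) (a :: u) c :=
  step (.read a hs hδ) h

theorem op {q q' : D.Q} {s s' : CStk Γ} {γ : Γ} {o : COp Γ} {u : List A}
    {c : D.Q × CStk Γ} (hs : ctop? s = some γ) (hδ : D.δ q γ = .op q' o)
    (ho : capply o s = some s') (h : D.Reach (q', s') u c) : D.Reach (q, s) u c :=
  step (.op hs hδ ho) h

theorem invariant {P : List A → D.Q × CStk Γ → Prop}
    (hP : ∀ {u c o c'}, P u c → CStep D c o c' → P (u ++ o.toList) c')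
    {c c' : D.Q × CStk Γ} {u v : List A} (h : D.Reach c v c') (hc : P u c) :
    P (u ++ v) c' := by
  induction h generalizing u with
  | refl => simpa using hc
  | step hs _ ih => simpa using ih (hP hc hs)

end Reach

theorem reach_of_run (R : CRun D) {i : ℕ} (hi : i ≤ R.len) :
    D.Reach (R.cfg 0) ((List.range i).filterMap R.lab) (R.cfg i) := by
  induction i with
  | zero => exact .refl _
  | succ i ih =>
    have h := (ih (by omega)).trans (.single (R.ok i (by omega)))
    cases hl : R.lab i <;> simpa [List.range_succ, List.filterMap_append, hl] using h

theorem exists_run_of_reach {c c' : D.Q × CStk Γ} {u : List A} (h : D.Reach c u c') :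
    ∃ R : CRun D, R.cfg 0 = c ∧ R.word = u ∧ R.cfg R.len = c' := by
  induction h with
  | refl c =>
    exact ⟨⟨0, fun _ => c, fun _ => none, fun _ h => absurd h (by omega)⟩, rfl, rfl, rfl⟩
  | step hs _ ih =>
    obtain ⟨R, rfl, rfl, rfl⟩ := ih
    exact ⟨R.cons _ _ hs, rfl, R.word_cons _ _ hs, rfl⟩

theorem mem_CLang_iff {w : List A} :
    w ∈ CLang D ↔ ∃ c, D.Reach (cinitCfg D) w c ∧ c.1 ∈ D.F := by
  constructor
  · rintro ⟨R, h₀, rfl, hF⟩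
    exact ⟨_, h₀ ▸ reach_of_run R le_rfl, hF⟩
  · rintro ⟨c, h, hF⟩
    obtain ⟨R, h₀, hw, rfl⟩ := exists_run_of_reach h
    exact ⟨R, h₀, hw, hF⟩

end CPDA2

section Stars

theorem starsAux_append (w v : List Alph) (cnt : ℕ) (st : List ℕ) :
    starsAux (w ++ v) cnt st = (starsAux w cnt st).bind (starsAux v (cnt + w.count .star)) := by
  induction w generalizing cnt st with
  | nil => rfl
  | cons a w ih =>
    cases a <;> cases st <;> simp [starsAux, ih, Nat.add_right_comm, Nat.add_assoc]

theorem sharp_notMem_of_starsAux_eq_some {w : List Alph} {cnt : ℕ} {st st' : List ℕ}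
    (h : starsAux w cnt st = some st') : Alph.sharp ∉ w := by
  intro hw
  obtain ⟨w₁, w₂, rfl⟩ := List.append_of_mem hw
  rw [starsAux_append] at h
  cases h₁ : starsAux w₁ cnt st <;> simp [h₁, starsAux] at h

theorem le_of_mem_starsAux {w : List Alph} {cnt : ℕ} {st st' : List ℕ}
    (h : starsAux w cnt st = some st') (hst : ∀ x ∈ st, x ≤ cnt) :
    ∀ x ∈ st', x ≤ cnt + w.count .star := by
  induction w generalizing cnt st with
  | nil => simp_all [starsAux]
  | cons a w ih =>
    cases a with
    | star =>
      simpa [Nat.add_assoc, Nat.add_comm 1] using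
        ih h (fun x hx => (hst x hx).trans (Nat.le_succ cnt))
    | lb => simpa using ih h (by simpa using hst)
    | rb =>
      cases st with
      | nil => simp [starsAux] at h
      | cons _ st => simpa using ih h (fun x hx => hst x (.tail _ hx))
    | sharp => simp [starsAux] at h

theorem stars_eq_zero_of_starsAux_eq_none {w : List Alph} (h : starsAux w 0 [] = none) :
    stars w = 0 := by
  simp [stars, h]

theorem stars_eq_zero_of_starsAux_eq_nil {w : List Alph} (h : starsAux w 0 [] = some []) :
    stars w = 0 := by
  simp [stars, h]

theorem stars_eq_of_starsAux_eq_cons {w : List Alph} {c : ℕ} {st : List ℕ}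
    (h : starsAux w 0 [] = some (c :: st)) : stars w = c := by
  simp [stars, h]

end Stars

namespace UAutomaton

inductive Sym : Type where
  | bot | e | b | j
  deriving DecidableEq

instance : Fintype Sym := ⟨{Sym.bot, .e, .b, .j}, fun x => by cases x <;> simp⟩

inductive State : Type where
  | start | scan | star₁ | star₂ | star₃ | opening | closing | collapsing
  | draining | dropping | invalid | skip (a : Alph) | final | dead (a : Alph)
  deriving DecidableEq

instance : Finite State :=
  have : Fintype State := ⟨{State.start, .scan, .star₁, .star₂, .star₃, .opening, .closing,
    .collapsing, .draining, .dropping, .invalid, .final} ∪ Finset.univ.image .skip ∪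
    Finset.univ.image .dead, fun x => by cases x <;> simp⟩
  inferInstance

def δ : State → Sym → CTrans Alph Sym State
  | .start, _ => .op .scan (.push2 .e)
  | .scan, .e => .read fun
      | .star => .star₁ | .lb => .opening | .rb => .invalid | .sharp => .final
  | .scan, .b => .read fun
      | .star => .star₁ | .lb => .opening | .rb => .closing | .sharp => .collapsing
  | .star₁, _ => .op .star₂ (.push1 .j)
  | .star₂, _ => .op .star₃ (.push2 .j)
  | .star₃, _ => .op .scan .pop1
  | .opening, _ => .op .scan (.push1 .b)
  | .closing, _ => .op .scan .pop1
  | .collapsing, _ => .op .draining .collapse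
  | .draining, .j => .read fun
      | .sharp => .dropping | a => .dead a
  | .draining, .bot => .op .final (.push1 .j)
  | .dropping, _ => .op .draining .pop2
  | .invalid, _ => .read fun
      | .sharp => .final | a => .skip a
  | .skip _, _ => .op .invalid (.push1 .j)
  | _, _ => .read .dead

def aut : CPDA2 Alph Sym where
  Q := State
  finQ := inferInstance
  qI := .start
  γI := .bot
  F := {.final}
  δ := δ
  read_inj := by
    intro q γ f h a a' haa
    cases q <;> cases γ <;> simp only [δ, CTrans.read.injEq, reduceCtorEq] at h <;> subst h <;>
      cases a <;> cases a' <;> simp_all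


def bottom : List (Sym × ℕ) := [(.bot, 1)]

/-- `push¹` stores the link `c + 2` in a `b` when `c` junk 1-stacks lie below, and collapsing on
it keeps just these and the bottom 1-stack. -/
def live : List ℕ → List (Sym × ℕ)
  | [] => [(.e, 1)]
  | c :: st => (.b, c + 2) :: live st

def stk (st : List ℕ) (junk : CStk Sym) : CStk Sym := live st :: (junk ++ [bottom])

def IsJunk (s : List (Sym × ℕ)) : Prop := ∃ n t, s = (.j, n) :: t

def Records (w : List Alph) (st : List ℕ) (junk : CStk Sym) : Prop :=
  starsAux w 0 [] = some st ∧ junk.length = w.count .star ∧ ∀ s ∈ junk, IsJunk s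

namespace Records

variable {w : List Alph} {c : ℕ} {st : List ℕ} {junk : CStk Sym}

theorem nil : Records [] [] [] := ⟨rfl, rfl, by simp⟩

theorem star (h : Records w st junk) {s : List (Sym × ℕ)} (hs : IsJunk s) :
    Records (w ++ [.star]) st (s :: junk) := by
  obtain ⟨h₁, h₂, h₃⟩ := h
  refine ⟨by simp [starsAux_append, h₁, starsAux], by simp [h₂], ?_⟩
  rintro s' (_ | ⟨_, hs'⟩)
  exacts [hs, h₃ s' hs']

theorem lb (h : Records w st junk) : Records (w ++ [.lb]) (junk.length :: st) junk :=
  ⟨by simp [starsAux_append, h.1, h.2.1, starsAux], by simp [h.2.1], h.2.2⟩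

theorem rb (h : Records w (c :: st) junk) : Records (w ++ [.rb]) st junk :=
  ⟨by simp [starsAux_append, h.1, starsAux], by simp [h.2.1], h.2.2⟩

theorem starsAux_rb_eq_none (h : Records w [] junk) : starsAux (w ++ [.rb]) 0 [] = none := by
  simp [starsAux_append, h.1, starsAux]

theorem le_length (h : Records w (c :: st) junk) : c ≤ junk.length := by
  simpa [h.2.1] using le_of_mem_starsAux h.1 (by simp) c (by simp)

end Records

theorem capply_push1_live (γ : Sym) (st : List ℕ) (rest : CStk Sym) :
    capply (.push1 γ) (live st :: rest) = some (((γ, rest.length + 1) :: live st) :: rest) := by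
  cases st <;> rfl

theorem capply_pop1_cons_live (x : Sym × ℕ) (st : List ℕ) (rest : CStk Sym) :
    capply .pop1 ((x :: live st) :: rest) = some (live st :: rest) := by
  cases st <;> rfl

theorem capply_push1_stk (st : List ℕ) (junk : CStk Sym) :
    capply (.push1 .b) (stk st junk) = some (stk (junk.length :: st) junk) := by
  simp [stk, capply_push1_live, live]

theorem capply_collapse_stk {c : ℕ} (st : List ℕ) {junk : CStk Sym} (hc : c ≤ junk.length) :
    capply .collapse (stk (c :: st) junk) = some (junk.drop (junk.length - c) ++ [bottom]) := by
  have : junk.length + 1 - c = junk.length - c + 1 := by omega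
  simp [stk, live, capply, this, List.drop_append_of_le_length, Nat.le_succ_of_le hc]

theorem capply_pop2_append_bottom (s : List (Sym × ℕ)) (junk : CStk Sym) :
    capply .pop2 (s :: (junk ++ [bottom])) = some (junk ++ [bottom]) := by
  cases junk <;> rfl

theorem reach_final_of_draining (jl : CStk Sym) (hjl : ∀ s ∈ jl, IsJunk s) :
    ∃ s, aut.Reach (.draining, jl ++ [bottom]) (List.replicate jl.length .sharp) (.final, s) := by
  induction jl with
  | nil => exact ⟨_, .op rfl rfl rfl (.refl _)⟩
  | cons s jl ih =>
    obtain ⟨n, t, rfl⟩ := hjl s (.head _)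
    obtain ⟨s', h⟩ := ih fun s hs => hjl s (.tail _ hs)
    exact ⟨s', .read rfl rfl (.op rfl rfl (capply_pop2_append_bottom _ _) h)⟩

theorem reach_final_of_invalid {v : List Alph} (hv : Alph.sharp ∉ v) (γ : Sym) (n : ℕ)
    (t : List (Sym × ℕ)) (rest : CStk Sym) :
    ∃ s, aut.Reach (.invalid, ((γ, n) :: t) :: rest) (v ++ [.sharp]) (.final, s) := by
  induction v generalizing γ n t with
  | nil => exact ⟨_, .read rfl rfl (.refl _)⟩
  | cons a v ih =>
    obtain ⟨s, h⟩ := ih (fun h => hv (.tail _ h)) .j (rest.length + 1) ((γ, n) :: t)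
    cases a
    case sharp => exact absurd (.head _) hv
    all_goals exact ⟨s, .read rfl rfl (.op rfl rfl rfl h)⟩

theorem reach_final_of_sharp {w : List Alph} {st : List ℕ} {junk : CStk Sym}
    (hR : Records w st junk) :
    ∃ s, aut.Reach (.scan, stk st junk) (List.replicate (stars w + 1) .sharp) (.final, s) := by
  cases st with
  | nil =>
    rw [stars_eq_zero_of_starsAux_eq_nil hR.1]
    exact ⟨_, .read rfl rfl (.refl _)⟩
  | cons c st =>
    have hc := hR.le_length
    obtain ⟨s, h⟩ := reach_final_of_draining (junk.drop (junk.length - c))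
      fun s hs => hR.2.2 s (List.mem_of_mem_drop hs)
    rw [List.length_drop, Nat.sub_sub_self hc] at h
    rw [stars_eq_of_starsAux_eq_cons hR.1]
    exact ⟨s, .read rfl rfl (.op rfl rfl (capply_collapse_stk st hc) h)⟩

theorem reach_star {st : List ℕ} {junk : CStk Sym} {u : List Alph}
    {c : aut.Q × CStk Sym}
    (h : aut.Reach (.scan, stk st (((.j, junk.length + 2) :: live st) :: junk)) u c) :
    aut.Reach (.scan, stk st junk) (.star :: u) c := by
  have hpush := capply_push1_live .j st (junk ++ [bottom])
  rw [List.length_append, List.length_singleton] at hpush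
  cases st <;> exact .read rfl rfl
    (.op rfl rfl hpush (.op rfl rfl rfl (.op rfl rfl (capply_pop1_cons_live _ _ _) h)))

theorem reach_lb {st : List ℕ} {junk : CStk Sym} {u : List Alph} {c : aut.Q × CStk Sym}
    (h : aut.Reach (.scan, stk (junk.length :: st) junk) u c) :
    aut.Reach (.scan, stk st junk) (.lb :: u) c := by
  cases st <;> exact .read rfl rfl (.op rfl rfl (capply_push1_stk _ junk) h)

theorem reach_rb {c₀ : ℕ} {st : List ℕ} {junk : CStk Sym} {u : List Alph}
    {c : aut.Q × CStk Sym} (h : aut.Reach (.scan, stk st junk) u c) :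
    aut.Reach (.scan, stk (c₀ :: st) junk) (.rb :: u) c :=
  .read rfl rfl (.op rfl rfl (capply_pop1_cons_live _ st _) h)

theorem reach_final_of_records {w v : List Alph} {st : List ℕ} {junk : CStk Sym}
    (hR : Records w st junk) (hv : Alph.sharp ∉ v) :
    ∃ s, aut.Reach (.scan, stk st junk)
      (v ++ List.replicate (stars (w ++ v) + 1) .sharp) (.final, s) := by
  induction v generalizing w st junk with
  | nil => simpa using reach_final_of_sharp hR
  | cons a v ih =>
    have hv' : Alph.sharp ∉ v := fun h => hv (.tail _ h)
    rw [← List.singleton_append, ← List.append_assoc]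
    cases a with
    | star =>
      obtain ⟨s, h⟩ := ih (hR.star ⟨_, _, rfl⟩) hv'
      exact ⟨s, reach_star h⟩
    | lb =>
      obtain ⟨s, h⟩ := ih hR.lb hv'
      exact ⟨s, reach_lb h⟩
    | rb =>
      cases st with
      | nil =>
        have hnone : starsAux (w ++ [.rb] ++ v) 0 [] = none := by
          rw [starsAux_append, hR.starsAux_rb_eq_none]; rfl
        rw [stars_eq_zero_of_starsAux_eq_none hnone]
        obtain ⟨s, h⟩ := reach_final_of_invalid hv' .e 1 [] (junk ++ [bottom])
        exact ⟨s, .read rfl rfl h⟩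
      | cons c st =>
        obtain ⟨s, h⟩ := ih hR.rb hv'
        exact ⟨s, reach_rb h⟩
    | sharp => exact absurd (.head _) hv

inductive Inv : List Alph → State × CStk Sym → Prop where
  | start : Inv [] (.start, [bottom])
  | scan {w st junk} : Records w st junk → Inv w (.scan, stk st junk)
  | star₁ {w st junk} : Records w st junk → Inv (w ++ [.star]) (.star₁, stk st junk)
  | star₂ {w st junk} (n : ℕ) : Records w st junk →
      Inv (w ++ [.star]) (.star₂, ((.j, n) :: live st) :: (junk ++ [bottom]))
  | star₃ {w st junk} (n : ℕ) : Records w st junk →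
      Inv (w ++ [.star])
        (.star₃, ((.j, n) :: live st) :: ((.j, n) :: live st) :: (junk ++ [bottom]))
  | opening {w st junk} : Records w st junk → Inv (w ++ [.lb]) (.opening, stk st junk)
  | closing {w c st junk} : Records w (c :: st) junk →
      Inv (w ++ [.rb]) (.closing, stk (c :: st) junk)
  | collapsing {w c st junk} : Records w (c :: st) junk →
      Inv (w ++ [.sharp]) (.collapsing, stk (c :: st) junk)
  | draining {w c st jl} : starsAux w 0 [] = some (c :: st) → (∀ s ∈ jl, IsJunk s) →
      jl.length ≤ c →
      Inv (w ++ List.replicate (c + 1 - jl.length) .sharp) (.draining, jl ++ [bottom])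
  | dropping {w c st s jl} : starsAux w 0 [] = some (c :: st) → IsJunk s →
      (∀ s ∈ jl, IsJunk s) → jl.length < c →
      Inv (w ++ List.replicate (c + 1 - jl.length) .sharp) (.dropping, s :: (jl ++ [bottom]))
  | invalid {w} (γ n t rest) : Alph.sharp ∉ w → starsAux w 0 [] = none →
      Inv w (.invalid, ((γ, n) :: t) :: rest)
  | skip {w a} (γ n t rest) : Alph.sharp ∉ w → starsAux w 0 [] = none → a ≠ .sharp →
      Inv (w ++ [a]) (.skip a, ((γ, n) :: t) :: rest)
  | final {u} (s) : u ∈ U → Inv u (.final, s)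
  | dead {u} (a s) : Inv u (.dead a, s)

theorem Inv.of_step_op {q q' : State} {s : CStk Sym} {o : COp Sym} {l : Option Alph}
    {c' : State × CStk Sym} {u : List Alph} (hs : CStep aut (q, s) l c')
    (hδ : ∀ γ, ctop? s = some γ → δ q γ = .op q' o)
    (h : ∀ s', capply o s = some s' → Inv u (q', s')) : Inv (u ++ l.toList) c' := by
  obtain ⟨rfl, s', hs', rfl⟩ := hs.eq_of_δ_eq_op hδ
  rw [Option.toList_none, List.append_nil]
  exact h s' hs'

theorem Inv.of_step_read {q : State} {s : CStk Sym} {f : Alph → State} {l : Option Alph}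
    {c' : State × CStk Sym} {u : List Alph} (hs : CStep aut (q, s) l c')
    (hδ : ∀ γ, ctop? s = some γ → δ q γ = .read f)
    (h : ∀ a, Inv (u ++ [a]) (f a, s)) : Inv (u ++ l.toList) c' := by
  obtain ⟨a, rfl, rfl⟩ := hs.eq_of_δ_eq_read hδ
  exact h a

theorem Inv.step_scan {w : List Alph} {st : List ℕ} {junk : CStk Sym} {o : Option Alph}
    {c' : State × CStk Sym} (hR : Records w st junk)
    (hs : CStep aut (.scan, stk st junk) o c') :
    Inv (w ++ o.toList) c' := by
  have hw := sharp_notMem_of_starsAux_eq_some hR.1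
  cases st with
  | nil =>
    refine Inv.of_step_read hs (fun _ h => by cases h; rfl) fun a => ?_
    cases a
    · exact .opening hR
    · exact .invalid _ _ _ _ (by simpa using hw) hR.starsAux_rb_eq_none
    · exact .star₁ hR
    · exact .final _ ⟨w, hw, by rw [stars_eq_zero_of_starsAux_eq_nil hR.1]; rfl⟩
  | cons c st =>
    refine Inv.of_step_read hs (fun _ h => by cases h; rfl) fun a => ?_
    cases a
    exacts [.opening hR, .closing hR, .star₁ hR, .collapsing hR]

theorem Inv.step_collapsing {w : List Alph} {c : ℕ} {st : List ℕ} {junk : CStk Sym}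
    {o : Option Alph} {c' : State × CStk Sym} (hR : Records w (c :: st) junk)
    (hs : CStep aut (.collapsing, stk (c :: st) junk) o c') :
    Inv (w ++ [.sharp] ++ o.toList) c' := by
  refine Inv.of_step_op hs (fun _ _ => rfl) fun _ h => ?_
  rw [capply_collapse_stk st hR.le_length, Option.some.injEq] at h
  have hlen : (junk.drop (junk.length - c)).length = c := by
    rw [List.length_drop, Nat.sub_sub_self hR.le_length]
  have := Inv.draining hR.1 (fun s hs => hR.2.2 s (List.mem_of_mem_drop hs)) hlen.le
  rw [hlen, Nat.add_sub_cancel_left] at this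
  exact h ▸ this

theorem Inv.step_invalid {w : List Alph} {γ : Sym} {n : ℕ} {t : List (Sym × ℕ)}
    {rest : CStk Sym} {o : Option Alph} {c' : State × CStk Sym} (hw : Alph.sharp ∉ w)
    (hnone : starsAux w 0 [] = none) (hs : CStep aut (.invalid, ((γ, n) :: t) :: rest) o c') :
    Inv (w ++ o.toList) c' := by
  refine Inv.of_step_read hs (fun _ _ => rfl) fun a => ?_
  cases a
  case sharp => exact .final _ ⟨_, hw, by rw [stars_eq_zero_of_starsAux_eq_none hnone]; rfl⟩
  all_goals exact .skip _ _ _ _ hw hnone nofun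

theorem Inv.step_draining {w : List Alph} {c : ℕ} {st : List ℕ} {jl : CStk Sym}
    {o : Option Alph} {c' : State × CStk Sym} (hw : starsAux w 0 [] = some (c :: st))
    (hjl : ∀ s ∈ jl, IsJunk s) (hle : jl.length ≤ c)
    (hs : CStep aut (.draining, jl ++ [bottom]) o c') :
    Inv (w ++ List.replicate (c + 1 - jl.length) .sharp ++ o.toList) c' := by
  cases jl with
  | nil =>
    refine Inv.of_step_op hs (fun _ h => by cases h; rfl) fun _ _ => .final _ ⟨w,
      sharp_notMem_of_starsAux_eq_some hw, by rw [stars_eq_of_starsAux_eq_cons hw]; rfl⟩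
  | cons s jl =>
    obtain ⟨n, t, rfl⟩ := hjl s (.head _)
    have hlt : jl.length < c := hle
    refine Inv.of_step_read hs (fun _ h => by cases h; rfl) fun a => ?_
    cases a
    case sharp =>
      have h := Inv.dropping (s := (.j, n) :: t) hw ⟨_, _, rfl⟩
        (fun s hs => hjl s (.tail _ hs)) hlt
      have hc : c + 1 - jl.length = c + 1 - (jl.length + 1) + 1 := by omega
      rwa [hc, List.replicate_succ', ← List.append_assoc] at h
    all_goals exact .dead _ _

theorem Inv.step {u : List Alph} {c c' : State × CStk Sym} {o : Option Alph} (h : Inv u c)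
    (hs : CStep aut c o c') : Inv (u ++ o.toList) c' := by
  cases h with
  | start => exact Inv.of_step_op hs (fun _ _ => rfl) fun _ h => by cases h; exact .scan .nil
  | scan hR => exact Inv.step_scan hR hs
  | star₁ hR =>
    refine Inv.of_step_op hs (fun _ _ => rfl) fun _ h => ?_
    rw [stk, capply_push1_live, Option.some.injEq] at h
    exact h ▸ .star₂ _ hR
  | star₂ n hR =>
    exact Inv.of_step_op hs (fun _ _ => rfl) fun _ h => by cases h; exact .star₃ n hR
  | star₃ n hR =>
    refine Inv.of_step_op hs (fun _ _ => rfl) fun _ h => ?_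
    rw [capply_pop1_cons_live, Option.some.injEq] at h
    exact h ▸ .scan (hR.star ⟨_, _, rfl⟩)
  | opening hR =>
    refine Inv.of_step_op hs (fun _ _ => rfl) fun _ h => ?_
    rw [capply_push1_stk, Option.some.injEq] at h
    exact h ▸ .scan hR.lb
  | closing hR =>
    refine Inv.of_step_op hs (fun _ _ => rfl) fun _ h => ?_
    rw [stk, live, capply_pop1_cons_live, Option.some.injEq] at h
    exact h ▸ .scan hR.rb
  | collapsing hR => exact Inv.step_collapsing hR hs
  | draining hw hjl hle => exact Inv.step_draining hw hjl hle hs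
  | dropping hw _ hjl hlt =>
    refine Inv.of_step_op hs (fun _ _ => rfl) fun _ h => ?_
    rw [capply_pop2_append_bottom, Option.some.injEq] at h
    exact h ▸ .draining hw hjl hlt.le
  | invalid γ n t rest hw hnone => exact Inv.step_invalid hw hnone hs
  | skip γ n t rest hw hnone ha =>
    refine Inv.of_step_op hs (fun _ _ => rfl) fun _ h => ?_
    cases h
    exact .invalid _ _ _ _ (by simp [hw, Ne.symm ha])
      (by rw [starsAux_append, hnone]; rfl)
  | final s hu => exact Inv.of_step_read hs (fun _ _ => rfl) fun _ => .dead _ _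
  | dead a s => exact Inv.of_step_read hs (fun _ _ => rfl) fun _ => .dead _ _

theorem U_subset_CLang : U ⊆ CLang aut := by
  rintro _ ⟨w, hw, rfl⟩
  obtain ⟨s, h⟩ := reach_final_of_records Records.nil hw
  exact CPDA2.mem_CLang_iff.2 ⟨_, .op rfl rfl rfl h, rfl⟩

theorem CLang_subset_U : CLang aut ⊆ U := by
  intro u hu
  obtain ⟨⟨q, s⟩, h, hF⟩ := CPDA2.mem_CLang_iff.1 hu
  obtain rfl : q = .final := hF
  have hInv := h.invariant (P := Inv) (fun hc hs => hc.step hs) Inv.start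
  rw [List.nil_append] at hInv
  cases hInv with
  | final _ hu => exact hu

end UAutomaton

/-- The language `U` over the alphabet `{[, ], ⋆, ♯}` is recognized by a
deterministic order-2 collapsible pushdown automaton. -/
theorem statement2 :
    ∃ (Γ : Type) (_ : Finite Γ) (D : CPDA2 Alph Γ), CLang D = U :=
  ⟨UAutomaton.Sym, inferInstance, UAutomaton.aut,
    UAutomaton.CLang_subset_U.antisymm UAutomaton.U_subset_CLang⟩

end HOPDA
end

section
/- Let 1 ≤ k ≤ n and let R be a k-upper run of an n-DPDA. Then R is (k−1)-upper if and only if |top^k(R(0))| ≤ |top^k(R(i))| for each i ∈ [0,|R|] such that the suffix R[i,|R|] is k-upper, where |s| denotes the number of (k−1)-stacks in the k-stack s. -/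
namespace HOPDA

instance : Fintype Alph :=
  ⟨{Alph.lb, Alph.rb, Alph.star, Alph.sharp}, fun x => by cases x <;> simp⟩

/-!
Follow the final stack backwards along the run: in `R(i)`, the history of `top^(k-1)(R(|R|))`
is the `c(i)`-th `(k-1)`-stack of the history of `top^k(R(|R|))`. The index `c` only changes
at a `push^k` acting on that `k`-stack while it is the topmost one, when the tracked stack is
the new copy; then `c(i) = |top^k(R(i))| - 1` and `c(i+1) = c(i) + 1`. So `c` is nondecreasing,
`c(i) < |top^k(R(i))|` whenever `R[i,|R|]` is `k`-upper, and `R` is `(k-1)`-upper iff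
`c(0) = |top^k(R(0))| - 1`. This gives one direction by monotonicity. Conversely, if
`c(0) < |top^k(R(0))| - 1 ≤ |top^k(R(|R|))| - 1 = c(|R|)`, then at the first step `j` where `c`
exceeds `c(0)` the suffix `R[j,|R|]` is `k`-upper and `|top^k(R(j))| = c(0) + 1 < |top^k(R(0))|`.
-/

theorem exists_le_lt_succ_of_lt {f : ℕ → ℕ} {a N : ℕ} (h0 : f 0 ≤ a) (hN : a < f N) :
    ∃ j < N, f j ≤ a ∧ a < f (j + 1) := by
  induction N with
  | zero => omega
  | succ N ih =>
    by_cases h : a < f N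
    · obtain ⟨j, hj, hfj⟩ := ih h
      exact ⟨j, by omega, hfj⟩
    · exact ⟨N, by omega, by omega, hN⟩

section Addresses

variable {Γ : Type}

@[simp]
theorem sub?_nil (s : St Γ) : sub? s [] = some s := by cases s <;> rfl

@[simp]
theorem sub?_leaf_cons (γ : Γ) (i : ℕ) (p : List ℕ) : sub? (St.leaf γ) (i :: p) = none := rfl

theorem sub?_node_cons (l : List (St Γ)) (i : ℕ) (p : List ℕ) :
    sub? (St.node l) (i :: p) = l[i]?.bind (sub? · p) := by
  simp only [sub?]
  cases l[i]? <;> rfl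

theorem sub?_append (s : St Γ) (u v : List ℕ) :
    sub? s (u ++ v) = (sub? s u).bind (sub? · v) := by
  induction u generalizing s with
  | nil => simp
  | cons i p ih =>
    cases s with
    | leaf γ => simp
    | node l =>
      simp only [List.cons_append, sub?_node_cons, Option.bind_assoc, ih]

theorem isSome_sub?_of_append {s : St Γ} {u v : List ℕ} (h : (sub? s (u ++ v)).isSome) :
    (sub? s u).isSome := by
  rw [sub?_append] at h
  cases hu : sub? s u <;> simp_all

theorem lt_sizeAt_of_isSome_sub? {s : St Γ} {u : List ℕ} {c : ℕ}
    (h : (sub? s (u ++ [c])).isSome) : c < sizeAt s u := by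
  rw [sub?_append] at h
  unfold sizeAt
  rcases hu : sub? s u with _ | _ | l
  · simp [hu] at h
  · simp [hu] at h
  · simp only [hu, Option.bind_some, sub?_node_cons, sub?_nil] at h
    by_contra hc
    simp [List.getElem?_eq_none (not_lt.mp hc)] at h

@[simp]
theorem modAt_nil (s : St Γ) (f : St Γ → Option (St Γ)) : modAt s [] f = f s := by
  cases s <;> rfl

theorem modAt_node_cons (l : List (St Γ)) (i : ℕ) (p : List ℕ) (f : St Γ → Option (St Γ)) :
    modAt (St.node l) (i :: p) f =
      l[i]?.bind fun t => (modAt t p f).map fun t' => St.node (l.set i t') := by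
  simp only [modAt]
  rcases l[i]? with _ | t
  · rfl
  · simp only [Option.bind_some]
    cases modAt t p f <;> rfl

variable {s s' : St Γ} {u : List ℕ} {f : St Γ → Option (St Γ)}

theorem exists_of_modAt_node_cons {l : List (St Γ)} {i : ℕ} {p : List ℕ}
    (h : modAt (St.node l) (i :: p) f = some s') :
    ∃ t t', l[i]? = some t ∧ modAt t p f = some t' ∧ s' = St.node (l.set i t') := by
  rw [modAt_node_cons] at h
  obtain ⟨t, ht, h⟩ := Option.bind_eq_some_iff.mp h
  obtain ⟨t', ht', rfl⟩ := Option.map_eq_some_iff.mp h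
  exact ⟨t, t', ht, ht', rfl⟩

theorem exists_sub?_of_modAt (h : modAt s u f = some s') :
    ∃ t t', sub? s u = some t ∧ f t = some t' ∧ sub? s' u = some t' := by
  induction u generalizing s s' with
  | nil => exact ⟨s, s', sub?_nil s, by simpa using h, sub?_nil s'⟩
  | cons i p ih =>
    cases s with
    | leaf γ => simp [modAt] at h
    | node l =>
      obtain ⟨t, t'', hl, hm, rfl⟩ := exists_of_modAt_node_cons h
      obtain ⟨a, a', ha, ha', ha''⟩ := ih hm
      have hi : i < l.length := (List.getElem?_eq_some_iff.mp hl).1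
      refine ⟨a, a', ?_, ha', ?_⟩
      · rw [sub?_node_cons, hl]; exact ha
      · rw [sub?_node_cons, List.getElem?_set_self hi]; exact ha''

theorem sub?_modAt_of_not_prefix (h : modAt s u f = some s') {v : List ℕ}
    (huv : ¬ u <+: v) (hvu : ¬ v <+: u) : sub? s' v = sub? s v := by
  induction u generalizing s s' v with
  | nil => exact absurd List.nil_prefix huv
  | cons i p ih =>
    cases s with
    | leaf γ => simp [modAt] at h
    | node l =>
      obtain ⟨t, t'', hl, hm, rfl⟩ := exists_of_modAt_node_cons h
      have hi : i < l.length := (List.getElem?_eq_some_iff.mp hl).1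
      rcases v with _ | ⟨j, w⟩
      · exact absurd List.nil_prefix hvu
      rw [sub?_node_cons, sub?_node_cons]
      by_cases hij : j = i
      · subst hij
        rw [List.getElem?_set_self hi, hl, Option.bind_some, Option.bind_some]
        exact ih hm (fun hc => huv (List.cons_prefix_cons.mpr ⟨rfl, hc⟩))
          (fun hc => hvu (List.cons_prefix_cons.mpr ⟨rfl, hc⟩))
      · rw [List.getElem?_set_ne (Ne.symm hij)]

theorem isSome_sub?_of_modAt (h : modAt s u f = some s') {v : List ℕ}
    (hv : (sub? s' v).isSome)
    (hf : ∀ t t' w, sub? s u = some t → f t = some t' → v = u ++ w →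
      (sub? t' w).isSome → (sub? t w).isSome) :
    (sub? s v).isSome := by
  obtain ⟨t, t', hst, hft, hst'⟩ := exists_sub?_of_modAt h
  by_cases huv : u <+: v
  · obtain ⟨w, rfl⟩ := huv
    rw [sub?_append, hst', Option.bind_some] at hv
    rw [sub?_append, hst, Option.bind_some]
    exact hf t t' w hst hft rfl hv
  by_cases hvu : v <+: u
  · obtain ⟨w, rfl⟩ := hvu
    exact isSome_sub?_of_append (by rw [hst]; rfl)
  rwa [sub?_modAt_of_not_prefix h huv hvu] at hv

theorem isValid_of_sub?_eq_some {n : ℕ} {t : St Γ} {v : List ℕ} (hs : IsValid n s)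
    (h : sub? s v = some t) : IsValid (n - v.length) t := by
  induction v generalizing s n with
  | nil => cases Option.some.inj h; simpa using hs
  | cons i p ih =>
    rcases s with _ | l
    · simp at h
    rcases n with _ | n
    · exact absurd hs (by simp [IsValid])
    rw [sub?_node_cons, Option.bind_eq_some_iff] at h
    obtain ⟨a, ha, h⟩ := h
    simpa using ih (hs.2 a (List.mem_of_getElem? ha)) h

theorem isValid_of_modAt {n : ℕ} (hs : IsValid n s) (h : modAt s u f = some s')
    (hf : ∀ t t', sub? s u = some t → f t = some t' → IsValid (n - u.length) t') :
    IsValid n s' := by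
  induction u generalizing s s' n with
  | nil => simpa using hf s s' (sub?_nil s) (by simpa using h)
  | cons i p ih =>
    rcases s with _ | l
    · simp [modAt] at h
    rcases n with _ | n
    · exact absurd hs (by simp [IsValid])
    obtain ⟨t, t'', hl, hm, rfl⟩ := exists_of_modAt_node_cons h
    have ht'' : IsValid n t'' := by
      refine ih (hs.2 t (List.mem_of_getElem? hl)) hm fun a a' ha ha' => ?_
      simpa using hf a a' (by rw [sub?_node_cons, hl]; exact ha) ha'
    refine ⟨by simpa using hs.1, fun x hx => ?_⟩
    rcases List.mem_or_eq_of_mem_set hx with hx | rfl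
    · exact hs.2 x hx
    · exact ht''

end Addresses

section TopAddr

variable {Γ : Type} {n : ℕ} {s : St Γ}

@[simp]
theorem topAddr_zero (s : St Γ) : topAddr s 0 = [] := by cases s <;> rfl

theorem IsValid.exists_node (hs : IsValid (n + 1) s) :
    ∃ l, s = St.node l ∧ l ≠ [] ∧ ∀ t ∈ l, IsValid n t := by
  rcases s with _ | l
  · exact absurd hs (by simp [IsValid])
  · exact ⟨l, rfl, hs⟩

theorem getElem?_length_sub_one {α : Type*} {l : List α} (d : α) (h : l ≠ []) :
    l[l.length - 1]? = some (l.getLastD d) := by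
  rw [← List.getLast?_eq_getElem?, List.getLastD_eq_getLast?, List.getLast?_eq_some_getLast h]
  rfl

theorem IsValid.exists_sub?_topAddr (hs : IsValid n s) {d : ℕ} (hd : d ≤ n) :
    ∃ t, sub? s (topAddr s d) = some t ∧ IsValid (n - d) t := by
  induction n generalizing s d with
  | zero =>
    obtain rfl : d = 0 := by omega
    exact ⟨s, by simp, hs⟩
  | succ n ih =>
    rcases d with _ | d
    · exact ⟨s, by simp, hs⟩
    obtain ⟨l, rfl, hne, hmem⟩ := hs.exists_node
    have hlast := getElem?_length_sub_one (St.node []) hne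
    obtain ⟨u, hu, hu'⟩ := ih (hmem _ (List.mem_of_getElem? hlast)) (d := d) (by omega)
    refine ⟨u, ?_, by simpa using hu'⟩
    rw [topAddr, sub?_node_cons, hlast, Option.bind_some]
    exact hu

theorem IsValid.length_topAddr (hs : IsValid n s) {d : ℕ} (hd : d ≤ n) :
    (topAddr s d).length = d := by
  induction n generalizing s d with
  | zero =>
    obtain rfl : d = 0 := by omega
    simp
  | succ n ih =>
    rcases d with _ | d
    · simp
    obtain ⟨l, rfl, hne, hmem⟩ := hs.exists_node
    have hlast := getElem?_length_sub_one (St.node []) hne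
    rw [topAddr, List.length_cons, ih (hmem _ (List.mem_of_getElem? hlast)) (by omega)]

theorem IsValid.sizeAt_topAddr_pos (hs : IsValid n s) {d : ℕ} (hd : d < n) :
    0 < sizeAt s (topAddr s d) := by
  obtain ⟨t, ht, hv⟩ := hs.exists_sub?_topAddr hd.le
  obtain ⟨l, rfl, hne, -⟩ := (show IsValid (n - d - 1 + 1) t by
    rwa [Nat.sub_add_cancel (by omega)]).exists_node
  simpa [sizeAt, ht] using List.length_pos_of_ne_nil hne

theorem IsValid.topAddr_succ (hs : IsValid n s) {d : ℕ} (hd : d < n) :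
    topAddr s (d + 1) = topAddr s d ++ [sizeAt s (topAddr s d) - 1] := by
  induction n generalizing s d with
  | zero => omega
  | succ n ih =>
    obtain ⟨l, rfl, hne, hmem⟩ := hs.exists_node
    rcases d with _ | d
    · simp [topAddr, sizeAt]
    have hlast := getElem?_length_sub_one (St.node []) hne
    have hsz : sizeAt (St.node l) (topAddr (St.node l) (d + 1)) =
        sizeAt (l.getLastD (St.node [])) (topAddr (l.getLastD (St.node [])) d) := by
      rw [topAddr, sizeAt, sizeAt, sub?_node_cons, hlast, Option.bind_some]
    rw [hsz, topAddr, topAddr, ih (hmem _ (List.mem_of_getElem? hlast)) (by omega)]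
    rfl

end TopAddr

section Operations

variable {Γ : Type} {n : ℕ} {s s' : St Γ}

def ReplacesLeaf (f : St Γ → Option (St Γ)) : Prop :=
  ∀ a b, f a = some b → (∃ x, a = St.leaf x) ∧ ∃ y, b = St.leaf y

theorem isSome_sub?_of_modAt_replacesLeaf {f : St Γ → Option (St Γ)} (hf : ReplacesLeaf f)
    {u w : List ℕ} (h : modAt s u f = some s') (hw : (sub? s' w).isSome) :
    (sub? s w).isSome := by
  refine isSome_sub?_of_modAt h hw fun a b w _ hab _ hb => ?_
  obtain ⟨⟨x, rfl⟩, ⟨y, rfl⟩⟩ := hf a b hab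
  rcases w with _ | ⟨c, w⟩ <;> simp_all

theorem isValid_of_modAt_replacesLeaf {f : St Γ → Option (St Γ)} (hf : ReplacesLeaf f)
    {d : ℕ} {u : List ℕ} (hs : IsValid d s) (h : modAt s u f = some s') : IsValid d s' := by
  refine isValid_of_modAt hs h fun a b ha hab => ?_
  obtain ⟨⟨x, rfl⟩, ⟨y, rfl⟩⟩ := hf a b hab
  have hva := isValid_of_sub?_eq_some hs ha
  rcases hd : d - u.length with _ | e
  · trivial
  · rw [hd] at hva; exact absurd hva (by simp [IsValid])

theorem popStk_eq_some {t t' : St Γ} (h : popStk t = some t') :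
    ∃ l, t = St.node l ∧ 2 ≤ l.length ∧ t' = St.node l.dropLast := by
  rcases t with _ | l
  · simp [popStk] at h
  · simp only [popStk, Option.ite_none_right_eq_some, Option.some.injEq] at h
    exact ⟨l, rfl, h.1, h.2.symm⟩

theorem dupTop_eq_some {r : ℕ} {γ : Γ} {t t' : St Γ} (h : dupTop r γ t = some t') :
    ∃ l tl tl', t = St.node l ∧ l.getLast? = some tl ∧
      modAt tl (topAddr tl (r - 1)) (fun u =>
        match u with
        | St.leaf _ => some (St.leaf γ)
        | St.node _ => none) = some tl' ∧ t' = St.node (l ++ [tl']) := by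
  rcases t with _ | l
  · simp [dupTop] at h
  simp only [dupTop] at h
  split at h
  next => simp at h
  next tl hg =>
    split at h
    next => simp at h
    next tl' hm => exact ⟨l, tl, tl', rfl, hg, hm, (Option.some.inj h).symm⟩

theorem replacesLeaf_setLeaf (γ : Γ) :
    ReplacesLeaf fun u : St Γ =>
      match u with
      | St.leaf _ => some (St.leaf γ)
      | St.node _ => none := by
  rintro (x | l) b h
  · exact ⟨⟨x, rfl⟩, ⟨γ, (Option.some.inj h).symm⟩⟩
  · simp at h

theorem isValid_of_popOp {r : ℕ} (hs : IsValid n s) (h : popOp n r s = some s') :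
    IsValid n s' := by
  refine isValid_of_modAt hs h fun t t' hst hpop => ?_
  obtain ⟨l, rfl, hl2, rfl⟩ := popStk_eq_some hpop
  have hv := isValid_of_sub?_eq_some hs hst
  rcases hd : n - (topAddr s (n - r)).length with _ | e
  · rw [hd] at hv; exact absurd hv (by simp [IsValid])
  rw [hd] at hv
  refine ⟨fun hc => ?_, fun x hx => hv.2 x (List.dropLast_subset _ hx)⟩
  have := congrArg List.length hc
  simp only [List.length_dropLast, List.length_nil] at this
  omega

theorem isValid_of_pushOp {r : ℕ} {γ : Γ} (hr1 : 1 ≤ r) (hrn : r ≤ n) (hs : IsValid n s)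
    (h : pushOp n r γ s = some s') : IsValid n s' := by
  refine isValid_of_modAt hs h fun t t' hst hdup => ?_
  obtain ⟨l, tl, tl', rfl, hg, hm, rfl⟩ := dupTop_eq_some hdup
  have hv := isValid_of_sub?_eq_some hs hst
  obtain ⟨e, he⟩ : ∃ e, n - (topAddr s (n - r)).length = e + 1 :=
    ⟨r - 1, by rw [hs.length_topAddr (Nat.sub_le n r)]; omega⟩
  rw [he] at hv ⊢
  refine ⟨by simp, fun x hx => ?_⟩
  rcases List.mem_append.mp hx with hx | hx
  · exact hv.2 x hx
  · rw [List.mem_singleton.mp hx]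
    exact isValid_of_modAt_replacesLeaf (replacesLeaf_setLeaf γ)
      (hv.2 tl (List.mem_of_getLast? hg)) hm

theorem isValid_of_applyOp {o : Op Γ} (hs : IsValid n s) (h : applyOp n o s = some s') :
    IsValid n s' := by
  rcases o with r | ⟨r, γ⟩ <;> simp only [applyOp] at h <;> split at h
  · exact isValid_of_popOp hs h
  · simp at h
  · next hr => exact isValid_of_pushOp hr.1 hr.2 hs h
  · simp at h

theorem histStep_push_of_forall_ne {r : ℕ} {γ : Γ} {v : List ℕ}
    (hv : ∀ w, v ≠ topAddr s (n - r) ++ sizeAt s (topAddr s (n - r)) :: w) :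
    histStep n (Op.push r γ) s v = v := by
  refine if_neg fun h => hv (v.drop (n - r + 1)) ?_
  have hv' := List.take_append_drop (n - r + 1) v
  rw [h] at hv'
  simpa using hv'.symm

theorem histStep_push_copy (hs : IsValid n s) (r : ℕ) (γ : Γ) (w : List ℕ) :
    histStep n (Op.push r γ) s (topAddr s (n - r) ++ sizeAt s (topAddr s (n - r)) :: w) =
      topAddr s (n - r) ++ (sizeAt s (topAddr s (n - r)) - 1) :: w := by
  have hlen := hs.length_topAddr (Nat.sub_le n r)
  refine (if_pos ?_).trans ?_
  · rw [← List.singleton_append, ← List.append_assoc, List.take_left' (by simp [hlen])]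
  · rw [List.set_append_right _ _ (by omega)]
    simp [hlen]

theorem isSome_sub?_histStep_pop {r : ℕ} (h : popOp n r s = some s') {v : List ℕ}
    (hv : (sub? s' v).isSome) : (sub? s (histStep n (Op.pop r) s v)).isSome := by
  refine isSome_sub?_of_modAt h hv fun t t' w _ hpop _ hw => ?_
  obtain ⟨l, rfl, -, rfl⟩ := popStk_eq_some hpop
  rcases w with _ | ⟨c, w⟩
  · simp
  rw [sub?_node_cons, List.getElem?_dropLast] at hw
  rw [sub?_node_cons]
  split at hw
  · exact hw
  · simp at hw

theorem isSome_sub?_histStep_push (hs : IsValid n s) {r : ℕ} {γ : Γ}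
    (h : pushOp n r γ s = some s') {v : List ℕ} (hv : (sub? s' v).isSome) :
    (sub? s (histStep n (Op.push r γ) s v)).isSome := by
  obtain ⟨t, t', hst, hdup, hst'⟩ := exists_sub?_of_modAt h
  obtain ⟨l, tl, tl', rfl, hg, hm, rfl⟩ := dupTop_eq_some hdup
  have hsz : sizeAt s (topAddr s (n - r)) = l.length := by simp [sizeAt, hst]
  by_cases hcopy : ∃ w, v = topAddr s (n - r) ++ sizeAt s (topAddr s (n - r)) :: w
  · obtain ⟨w, rfl⟩ := hcopy
    rw [histStep_push_copy hs, hsz, sub?_append, hst, Option.bind_some, sub?_node_cons,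
      ← List.getLast?_eq_getElem?, hg, Option.bind_some]
    rw [hsz, sub?_append, hst', Option.bind_some, sub?_node_cons, List.getElem?_concat_length,
      Option.bind_some] at hv
    exact isSome_sub?_of_modAt_replacesLeaf (replacesLeaf_setLeaf γ) hm hv
  push Not at hcopy
  rw [histStep_push_of_forall_ne hcopy]
  refine isSome_sub?_of_modAt h hv fun t₀ t₀' w hst₀ hdup₀ hvw hw => ?_
  obtain rfl : t₀ = St.node l := Option.some.inj (hst₀.symm.trans hst)
  obtain rfl : t₀' = St.node (l ++ [tl']) := Option.some.inj (hdup₀.symm.trans hdup)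
  rcases w with _ | ⟨c, w⟩
  · simp
  rw [sub?_node_cons] at hw ⊢
  have hc : c ≠ l.length := by
    rintro rfl
    exact hcopy w (by rw [hvw, hsz])
  have hc' : c < l.length + 1 := by
    by_contra hc'
    rw [List.getElem?_eq_none (by simp; omega)] at hw
    simp at hw
  rwa [List.getElem?_append_left (by omega)] at hw

theorem isSome_sub?_histStep (hs : IsValid n s) {o : Op Γ} (h : applyOp n o s = some s')
    {v : List ℕ} (hv : (sub? s' v).isSome) : (sub? s (histStep n o s v)).isSome := by
  rcases o with r | ⟨r, γ⟩ <;> simp only [applyOp] at h <;> split at h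
  · exact isSome_sub?_histStep_pop h hv
  · simp at h
  · exact isSome_sub?_histStep_push hs h hv
  · simp at h

theorem histStep_append_singleton (hs : IsValid n s) (o : Op Γ) {m : ℕ} {x : List ℕ}
    (hx : x.length = m) (c : ℕ) :
    (histStep n o s x).length = m ∧
      (histStep n o s (x ++ [c]) = histStep n o s x ++ [c] ∨
        x = topAddr s m ∧ c = sizeAt s x ∧ histStep n o s x = x ∧
          histStep n o s (x ++ [c]) = x ++ [c - 1]) := by
  rcases o with r | ⟨r, γ⟩
  · exact ⟨hx, Or.inl rfl⟩
  have hta := hs.length_topAddr (Nat.sub_le n r)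
  by_cases hcopy : ∃ w, x ++ [c] = topAddr s (n - r) ++ sizeAt s (topAddr s (n - r)) :: w
  · obtain ⟨w, hw⟩ := hcopy
    rcases w.eq_nil_or_concat with rfl | ⟨w, c', rfl⟩
    · obtain ⟨rfl, rfl⟩ : x = topAddr s (n - r) ∧ c = sizeAt s (topAddr s (n - r)) := by
        simpa using hw
      obtain rfl : m = n - r := by rw [← hx, hta]
      have hx : histStep n (Op.push r γ) s (topAddr s (n - r)) = topAddr s (n - r) :=
        histStep_push_of_forall_ne fun w h => by simpa using congrArg List.length h
      refine ⟨by rw [hx]; exact hta, Or.inr ⟨rfl, rfl, hx, ?_⟩⟩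
      exact histStep_push_copy hs r γ []
    · rw [List.concat_eq_append, ← List.cons_append, ← List.append_assoc] at hw
      obtain ⟨rfl, rfl⟩ := List.append_singleton_inj.mp hw
      refine ⟨by simpa [histStep_push_copy hs] using hx, Or.inl ?_⟩
      rw [List.append_assoc, List.cons_append, histStep_push_copy hs, histStep_push_copy hs]
      simp
  · push Not at hcopy
    have hx' : ∀ w, x ≠ topAddr s (n - r) ++ sizeAt s (topAddr s (n - r)) :: w :=
      fun w h => hcopy (w ++ [c]) (by simp [h])
    rw [histStep_push_of_forall_ne hcopy, histStep_push_of_forall_ne hx']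
    exact ⟨hx, Or.inl rfl⟩

end Operations

namespace Run

variable {n : ℕ} {A Γ : Type} {D : DPDA n A Γ} (R : Run D)

theorem stepHist_cases {j : ℕ} (hj : j < R.len) :
    IsValid n (R.cfg j).2 ∧
      ((R.cfg (j + 1)).2 = (R.cfg j).2 ∧ R.stepHist j = id ∨
        ∃ o, applyOp n o (R.cfg j).2 = some (R.cfg (j + 1)).2 ∧
          R.stepHist j = histStep n o (R.cfg j).2) := by
  have h := R.ok j hj
  unfold stepHist
  revert h
  generalize R.cfg j = c, R.cfg (j + 1) = c', R.lab j = a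
  intro h
  cases h with
  | read a hval htop hδ => exact ⟨hval, Or.inl ⟨rfl, by simp only [htop, hδ]⟩⟩
  | op hval htop hδ happ => exact ⟨hval, Or.inr ⟨_, happ, by simp only [htop, hδ]⟩⟩

theorem isValid_cfg_succ {j : ℕ} (hj : j < R.len) : IsValid n (R.cfg (j + 1)).2 := by
  obtain ⟨hv, ⟨heq, -⟩ | ⟨o, happ, -⟩⟩ := R.stepHist_cases hj
  · exact heq ▸ hv
  · exact isValid_of_applyOp hv happ

theorem isValid_cfg (hlen : 0 < R.len) {i : ℕ} (hi : i ≤ R.len) : IsValid n (R.cfg i).2 := by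
  rcases Nat.lt_or_eq_of_le hi with hi | rfl
  · exact (R.stepHist_cases hi).1
  · obtain ⟨j, hj⟩ := Nat.exists_eq_add_one_of_ne_zero hlen.ne'
    exact hj ▸ R.isValid_cfg_succ (j := j) (by omega)

theorem isSome_sub?_stepHist {j : ℕ} (hj : j < R.len) {v : List ℕ}
    (hv : (sub? (R.cfg (j + 1)).2 v).isSome) : (sub? (R.cfg j).2 (R.stepHist j v)).isSome := by
  obtain ⟨hval, ⟨heq, hid⟩ | ⟨o, happ, hh⟩⟩ := R.stepHist_cases hj
  · rwa [hid, id, ← heq]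
  · exact hh ▸ isSome_sub?_histStep hval happ hv

theorem stepHist_append_singleton {j : ℕ} (hj : j < R.len) {m : ℕ} {x : List ℕ}
    (hx : x.length = m) (c : ℕ) :
    (R.stepHist j x).length = m ∧
      (R.stepHist j (x ++ [c]) = R.stepHist j x ++ [c] ∨
        x = topAddr (R.cfg j).2 m ∧ c = sizeAt (R.cfg j).2 x ∧ R.stepHist j x = x ∧
          R.stepHist j (x ++ [c]) = x ++ [c - 1]) := by
  obtain ⟨hval, ⟨-, hid⟩ | ⟨o, -, hh⟩⟩ := R.stepHist_cases hj
  · exact ⟨by rw [hid]; exact hx, Or.inl (by rw [hid]; rfl)⟩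
  · exact hh ▸ histStep_append_singleton hval o hx c

theorem histTo_of_le {i j : ℕ} (h : j ≤ i) (p : List ℕ) : R.histTo i j p = p := by
  cases j with
  | zero => rfl
  | succ j => simp only [histTo, if_pos h]

theorem histTo_eq_stepHist {i j : ℕ} (h : i < j) (p : List ℕ) :
    R.histTo i j p = R.stepHist i (R.histTo (i + 1) j p) := by
  induction j generalizing p with
  | zero => omega
  | succ j ih =>
    simp only [histTo, if_neg (show ¬ j + 1 ≤ i by omega)]
    rcases Nat.lt_or_eq_of_le (Nat.le_of_lt_succ h) with h | rfl
    · rw [ih h, if_neg (by omega)]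
    · rw [if_pos le_rfl, histTo_of_le R le_rfl]

theorem sub_histTo (i j t : ℕ) (p : List ℕ) :
    (R.sub i j).histTo 0 t p = R.histTo i (i + t) p := by
  induction t generalizing p with
  | zero => rw [histTo_of_le _ le_rfl, histTo_of_le _ (by omega)]
  | succ t ih =>
    rw [← Nat.add_assoc]
    simp only [histTo, if_neg (show ¬ t + 1 ≤ 0 by omega),
      if_neg (show ¬ i + t + 1 ≤ i by omega)]
    exact ih _

/-- The address in `R(i)` of the history of `top^(n-d)(R(|R|))`. -/
def origin (d i : ℕ) : List ℕ := R.histTo i R.len (topAddr (R.cfg R.len).2 d)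

/-- The position of `hist(top^(n-m-1)(R(|R|)))` inside `hist(top^(n-m)(R(|R|)))` in `R(i)`. -/
def originIdx (m i : ℕ) : ℕ := (R.origin (m + 1) i).getLastD 0

theorem origin_of_len_le {d i : ℕ} (h : R.len ≤ i) :
    R.origin d i = topAddr (R.cfg R.len).2 d :=
  R.histTo_of_le h _

theorem origin_eq_stepHist {d i : ℕ} (h : i < R.len) :
    R.origin d i = R.stepHist i (R.origin d (i + 1)) :=
  R.histTo_eq_stepHist h _

theorem isUpper_iff {k : ℕ} :
    R.IsUpper k ↔ R.origin (n - k) 0 = topAddr (R.cfg 0).2 (n - k) :=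
  Iff.rfl

theorem isUpper_sub_iff {k i : ℕ} (hi : i ≤ R.len) :
    (R.sub i R.len).IsUpper k ↔ R.origin (n - k) i = topAddr (R.cfg i).2 (n - k) := by
  have hlen : (R.sub i R.len).len = R.len - i := by simp [Run.sub]
  have hend : i + (R.len - i) = R.len := by omega
  unfold IsUpper
  rw [hlen, sub_histTo, hend]
  change R.histTo i R.len (topAddr (R.cfg (i + (R.len - i))).2 (n - k)) = _ ↔ _
  rw [hend]
  rfl

variable {R} {m : ℕ}

theorem origin_succ_eq_append (hv : IsValid n (R.cfg R.len).2) (hm : m < n) {i : ℕ}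
    (hi : i ≤ R.len) :
    R.origin (m + 1) i = R.origin m i ++ [R.originIdx m i] ∧ (R.origin m i).length = m ∧
      (sub? (R.cfg i).2 (R.origin (m + 1) i)).isSome := by
  suffices (∃ c, R.origin (m + 1) i = R.origin m i ++ [c]) ∧ (R.origin m i).length = m ∧
      (sub? (R.cfg i).2 (R.origin (m + 1) i)).isSome by
    obtain ⟨⟨c, hc⟩, h⟩ := this
    exact ⟨by rw [originIdx, hc, List.getLastD_concat], h⟩
  induction hi using Nat.decreasingInduction with
  | self =>
    obtain ⟨t, ht, -⟩ := hv.exists_sub?_topAddr hm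
    rw [R.origin_of_len_le le_rfl, R.origin_of_len_le le_rfl, ht]
    exact ⟨⟨_, hv.topAddr_succ hm⟩, hv.length_topAddr hm.le, rfl⟩
  | of_succ i hi ih =>
    obtain ⟨⟨c, hc⟩, hlen, hsome⟩ := ih
    obtain ⟨hlen', hcases⟩ := R.stepHist_append_singleton hi hlen c
    rw [R.origin_eq_stepHist hi, R.origin_eq_stepHist hi (d := m)]
    refine ⟨?_, hlen', R.isSome_sub?_stepHist hi hsome⟩
    rcases hcases with h | ⟨-, -, hx, h⟩
    · exact ⟨c, by rw [hc, h]⟩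
    · exact ⟨c - 1, by rw [hc, h, hx]⟩

theorem originIdx_succ_cases (hv : IsValid n (R.cfg R.len).2) (hm : m < n) {i : ℕ}
    (hi : i < R.len) :
    R.originIdx m (i + 1) = R.originIdx m i ∨
      R.originIdx m (i + 1) = R.originIdx m i + 1 ∧
        R.origin m i = topAddr (R.cfg i).2 m ∧
        R.originIdx m i + 1 = sizeAt (R.cfg i).2 (topAddr (R.cfg i).2 m) := by
  obtain ⟨hc, hlen, -⟩ := origin_succ_eq_append hv hm hi
  obtain ⟨-, hcases⟩ := R.stepHist_append_singleton hi hlen (R.originIdx m (i + 1))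
  have hidx : R.originIdx m i = (R.stepHist i (R.origin (m + 1) (i + 1))).getLastD 0 := by
    rw [originIdx, R.origin_eq_stepHist hi]
  rw [hc] at hidx
  rcases hcases with h | ⟨htop, hsz, hx, h⟩
  · left
    rw [hidx, h, List.getLastD_concat]
  · have hpos := (R.stepHist_cases hi).1.sizeAt_topAddr_pos hm
    rw [h, List.getLastD_concat] at hidx
    rw [← htop] at hpos
    refine Or.inr ⟨by omega, by rw [R.origin_eq_stepHist hi, hx, htop], ?_⟩
    rw [hidx, ← htop, ← hsz]
    omega

theorem originIdx_monotone (hv : IsValid n (R.cfg R.len).2) (hm : m < n) :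
    Monotone (R.originIdx m) := by
  refine monotone_nat_of_le_succ fun i => ?_
  by_cases hi : i < R.len
  · rcases originIdx_succ_cases hv hm hi with h | ⟨h, -⟩ <;> omega
  · simp only [originIdx, R.origin_of_len_le (not_lt.mp hi),
      R.origin_of_len_le (show R.len ≤ i + 1 by omega), le_rfl]

theorem originIdx_lt_sizeAt (hv : IsValid n (R.cfg R.len).2) (hm : m < n) {i : ℕ}
    (hi : i ≤ R.len) (htop : R.origin m i = topAddr (R.cfg i).2 m) :
    R.originIdx m i < sizeAt (R.cfg i).2 (topAddr (R.cfg i).2 m) := by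
  obtain ⟨hc, -, hsome⟩ := origin_succ_eq_append hv hm hi
  rw [hc, htop] at hsome
  exact lt_sizeAt_of_isSome_sub? hsome

theorem origin_succ_eq_topAddr_iff (hv : IsValid n (R.cfg R.len).2) (hm : m < n) {i : ℕ}
    (hi : i ≤ R.len) (hvi : IsValid n (R.cfg i).2)
    (htop : R.origin m i = topAddr (R.cfg i).2 m) :
    R.origin (m + 1) i = topAddr (R.cfg i).2 (m + 1) ↔
      R.originIdx m i + 1 = sizeAt (R.cfg i).2 (topAddr (R.cfg i).2 m) := by
  have hpos := hvi.sizeAt_topAddr_pos hm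
  rw [(origin_succ_eq_append hv hm hi).1, htop, hvi.topAddr_succ hm, List.append_cancel_left_eq,
    List.singleton_inj]
  omega

end Run

theorem statement5_general {n : ℕ} {A Γ : Type}
    {D : DPDA n A Γ} (k : ℕ) (hk1 : 1 ≤ k) (hk : k ≤ n) (R : Run D)
    (hup : R.IsUpper k) :
    R.IsUpper (k - 1) ↔
      ∀ i ≤ R.len, (R.sub i R.len).IsUpper k →
        sizeAt (R.cfg 0).2 (topAddr (R.cfg 0).2 (n - k)) ≤
          sizeAt (R.cfg i).2 (topAddr (R.cfg i).2 (n - k)) := by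
  rcases Nat.eq_zero_or_pos R.len with hlen | hlen
  · refine iff_of_true ?_ fun i hi _ => by rw [show i = 0 by omega]
    simp only [Run.IsUpper, hlen, R.histTo_of_le le_rfl]
  have hm : n - k < n := by omega
  have hval : ∀ {i}, i ≤ R.len → IsValid n (R.cfg i).2 := R.isValid_cfg hlen
  have hv := hval le_rfl
  have htop_end := R.origin_of_len_le (d := n - k) le_rfl
  rw [Run.isUpper_iff] at hup ⊢
  rw [show n - (k - 1) = n - k + 1 by omega,
    Run.origin_succ_eq_topAddr_iff hv hm (Nat.zero_le _) (hval (Nat.zero_le _)) hup]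
  refine ⟨fun h0 i hi hsuf => ?_, fun H => ?_⟩
  · have := Run.originIdx_lt_sizeAt hv hm hi ((R.isUpper_sub_iff hi).mp hsuf)
    have := Run.originIdx_monotone hv hm (Nat.zero_le i)
    omega
  have hsz_end := H R.len le_rfl ((R.isUpper_sub_iff le_rfl).mpr htop_end)
  have hidx := (Run.origin_succ_eq_topAddr_iff hv hm le_rfl hv htop_end).mp
    (R.origin_of_len_le le_rfl)
  have := Run.originIdx_lt_sizeAt hv hm (Nat.zero_le _) hup
  by_contra hne
  obtain ⟨j, hj, hj0, hj1⟩ := exists_le_lt_succ_of_lt (f := R.originIdx (n - k)) le_rfl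
    (show R.originIdx (n - k) 0 < R.originIdx (n - k) R.len by omega)
  rcases Run.originIdx_succ_cases hv hm hj with hsame | ⟨-, htop, hsz⟩
  · omega
  · have := H j hj.le ((R.isUpper_sub_iff hj.le).mpr htop)
    omega

/-- Let `1 ≤ k ≤ n` and let `R` be a `k`-upper run of an `n`-DPDA.
Then `R` is `(k-1)`-upper iff `|top^k(R(0))| ≤ |top^k(R(i))|` for each `i ∈ [0,|R|]` such
that the suffix `R[i,|R|]` is `k`-upper. -/
theorem statement5 {n : ℕ} (hn : 1 ≤ n) {A Γ : Type} [Finite A] [Finite Γ]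
    {D : DPDA n A Γ} (k : ℕ) (hk1 : 1 ≤ k) (hk : k ≤ n) (R : Run D)
    (hup : R.IsUpper k) :
    R.IsUpper (k - 1) ↔
      ∀ i ≤ R.len, (R.sub i R.len).IsUpper k →
        sizeAt (R.cfg 0).2 (topAddr (R.cfg 0).2 (n - k)) ≤
          sizeAt (R.cfg i).2 (topAddr (R.cfg i).2 (n - k)) :=
  statement5_general k hk1 hk R hup

end HOPDA
end

section
/- For all positive integers a_1,…,a_k, b_1,…,b_l and c_0, c_1,…,c_l, pow(a_1,…,a_k, pow(c_0, c_1,…,c_l), b_1,…,b_l) ≤ pow(a_1,…,a_k, c_0, b_1·c_1, …, b_l·c_l). -/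
/-!
Prepending a list is monotone in the value of the rest, so the prefix `a` can be dropped.
Then `pow (pow (c₀ :: c) :: b) = (1 + c₀) ^ (pow c * pow b) - 1`, and the claim becomes
`pow b * pow c ≤ pow (b · c)`, proved by induction along the two lists from
`((1 + x) ^ m - 1) * ((1 + y) ^ n - 1) ≤ (1 + x * y) ^ (m * n) - 1`.
That inequality follows from two applications of `((1 + x) ^ m - 1) * y ≤ (1 + x * y) ^ m - 1`,
which compares the geometric sums `(1 + x) ^ m - 1 = x * ∑ i < m, (1 + x) ^ i` termwise.
-/

namespace HOPDA

lemma one_add_pow_sub_one_eq_sum_mul (x m : ℕ) :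
    (1 + x) ^ m - 1 = (∑ i ∈ Finset.range m, (1 + x) ^ i) * x := by
  rw [add_comm 1 x, ← geom_sum_mul_add x m, Nat.add_sub_cancel]

lemma one_add_pow_sub_one_mul_le (x y m : ℕ) :
    ((1 + x) ^ m - 1) * y ≤ (1 + x * y) ^ m - 1 := by
  rcases Nat.eq_zero_or_pos y with rfl | hy
  · simp
  rw [one_add_pow_sub_one_eq_sum_mul, one_add_pow_sub_one_eq_sum_mul, mul_assoc]
  gcongr with i
  exact Nat.le_mul_of_pos_right x hy

lemma one_add_pow_sub_one_mul_one_add_pow_sub_one_le (x y m n : ℕ) :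
    ((1 + x) ^ m - 1) * ((1 + y) ^ n - 1) ≤ (1 + x * y) ^ (m * n) - 1 := by
  have hu : 1 + ((1 + x) ^ m - 1) * y ≤ (1 + x * y) ^ m := by
    have := one_add_pow_sub_one_mul_le x y m
    have := Nat.one_le_pow m (1 + x * y) (by omega)
    omega
  set u := (1 + x) ^ m - 1
  calc u * ((1 + y) ^ n - 1) = ((1 + y) ^ n - 1) * u := mul_comm _ _
    _ ≤ (1 + y * u) ^ n - 1 := one_add_pow_sub_one_mul_le y u n
    _ ≤ ((1 + x * y) ^ m) ^ n - 1 := by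
      rw [mul_comm y u]
      gcongr
    _ = (1 + x * y) ^ (m * n) - 1 := by rw [pow_mul]

lemma one_add_pow_sub_one_le_of_le (x : ℕ) {m n : ℕ} (h : m ≤ n) :
    (1 + x) ^ m - 1 ≤ (1 + x) ^ n - 1 :=
  Nat.sub_le_sub_right (Nat.pow_le_pow_right (by omega) h) 1

lemma pow_append_le_pow_append (a : List ℕ) {l₁ l₂ : List ℕ} (h : pow l₁ ≤ pow l₂) :
    pow (a ++ l₁) ≤ pow (a ++ l₂) := by
  induction a with
  | nil => exact h
  | cons x a ih => exact one_add_pow_sub_one_le_of_le x ih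

lemma pow_mul_pow_le_pow_zipWith :
    ∀ (b c : List ℕ), b.length = c.length → pow b * pow c ≤ pow (List.zipWith (· * ·) b c)
  | [], [], _ => le_refl 1
  | x :: b, y :: c, h => by
    have ih := pow_mul_pow_le_pow_zipWith b c (by simpa using h)
    calc pow (x :: b) * pow (y :: c) ≤ (1 + x * y) ^ (pow b * pow c) - 1 :=
          one_add_pow_sub_one_mul_one_add_pow_sub_one_le x y _ _
      _ ≤ pow (x * y :: List.zipWith (· * ·) b c) := one_add_pow_sub_one_le_of_le (x * y) ih

lemma pow_cons_pow_cons (x : ℕ) (b c : List ℕ) :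
    pow (pow (x :: c) :: b) = (1 + x) ^ (pow c * pow b) - 1 := by
  have := Nat.one_le_pow (pow c) (1 + x) (by omega)
  rw [pow, pow, Nat.add_sub_cancel' this, pow_mul]

theorem statement12_general (a b c : List ℕ) (c0 : ℕ) (hlen : b.length = c.length) :
    pow (a ++ pow (c0 :: c) :: b) ≤ pow (a ++ c0 :: List.zipWith (· * ·) b c) := by
  refine pow_append_le_pow_append a ?_
  rw [pow_cons_pow_cons, mul_comm]
  exact one_add_pow_sub_one_le_of_le c0 (pow_mul_pow_le_pow_zipWith b c hlen)

/-- For all positive integers `a_1,…,a_k`, `b_1,…,b_l` and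
`c_0, c_1,…,c_l`,
`pow(a_1,…,a_k, pow(c_0,c_1,…,c_l), b_1,…,b_l) ≤ pow(a_1,…,a_k, c_0, b_1·c_1,…,b_l·c_l)`. -/
theorem statement12 (a b c : List ℕ) (c0 : ℕ) (hlen : b.length = c.length)
    (ha : ∀ x ∈ a, 0 < x) (hb : ∀ x ∈ b, 0 < x) (hc : ∀ x ∈ c, 0 < x) (hc0 : 0 < c0) :
    pow (a ++ pow (c0 :: c) :: b) ≤ pow (a ++ c0 :: List.zipWith (· * ·) b c) :=
  statement12_general a b c c0 hlen

end HOPDA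
end

section
/- For all positive integers a_1,…,a_k and x, and every index i with 1 ≤ i < k, pow(a_1,…,a_{i−1}, a_i^x, a_{i+1},…,a_{k−1}, a_k) ≤ pow(a_1,…,a_{k−1}, x·a_k). -/
namespace HOPDA

lemma bern (s x : ℕ) : 1 + x * s ≤ (1 + s) ^ x := by
  induction x with
  | zero => simp
  | succ n ih =>
    calc 1 + (n + 1) * s ≤ (1 + n * s) * (1 + s) := by nlinarith [Nat.zero_le (n * s * s)]
      _ ≤ (1 + s) ^ n * (1 + s) := Nat.mul_le_mul_right _ ih
      _ = (1 + s) ^ (n + 1) := (pow_succ _ _).symm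

lemma key (b : List ℕ) (z x : ℕ) : x * pow (b ++ [z]) ≤ pow (b ++ [x * z]) := by
  induction b with
  | nil => simp [pow]
  | cons c b ih =>
    simp only [List.cons_append, pow]
    set P := pow (b ++ [z]) with hP
    set Q := pow (b ++ [x * z]) with hQ
    have h1 : 1 ≤ (1 + c) ^ P := Nat.one_le_pow _ _ (by omega)
    have hs : (1 + c) ^ P = 1 + ((1 + c) ^ P - 1) := by omega
    have hb := bern ((1 + c) ^ P - 1) x
    rw [← hs, ← pow_mul] at hb
    calc x * ((1 + c) ^ P - 1) ≤ (1 + c) ^ (P * x) - 1 := by omega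
      _ ≤ (1 + c) ^ Q - 1 := by
          refine Nat.sub_le_sub_right (Nat.pow_le_pow_right (by omega) ?_) 1
          rw [Nat.mul_comm]; exact ih

lemma mono (a : List ℕ) {X Y : List ℕ} (h : pow X ≤ pow Y) :
    pow (a ++ X) ≤ pow (a ++ Y) := by
  induction a with
  | nil => simpa
  | cons c a ih =>
    simp only [List.cons_append, pow]
    exact Nat.sub_le_sub_right (Nat.pow_le_pow_right (by omega) ih) 1

lemma head (m x : ℕ) (hx : 0 < x) : 1 + m ^ x ≤ (1 + m) ^ x := by
  induction x with
  | zero => omega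
  | succ n ih =>
    rcases Nat.eq_zero_or_pos n with h | h
    · subst h; simp
    · have ihn := ih h
      have h1 : 1 ≤ (1 + m) ^ n := Nat.one_le_pow _ _ (by omega)
      calc 1 + m ^ (n + 1) = 1 + m ^ n * m := by rw [pow_succ]
        _ ≤ (1 + m ^ n) * (1 + m) := by nlinarith [Nat.zero_le (m ^ n)]
        _ ≤ (1 + m) ^ n * (1 + m) := Nat.mul_le_mul_right _ ihn
        _ = (1 + m) ^ (n + 1) := (pow_succ _ _).symm

/-- For all positive integers `a_1,…,a_k` and `x`, and every index `i`
with `1 ≤ i < k`,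
`pow(a_1,…,a_{i-1}, a_i^x, a_{i+1},…,a_{k-1}, a_k) ≤ pow(a_1,…,a_{k-1}, x·a_k)`.
(Here `a = a_1,…,a_{i-1}`, `m = a_i`, `b = a_{i+1},…,a_{k-1}` and `z = a_k`.) -/
theorem statement13 (a b : List ℕ) (m z x : ℕ)
    (ha : ∀ y ∈ a, 0 < y) (hb : ∀ y ∈ b, 0 < y) (hm : 0 < m) (hz : 0 < z) (hx : 0 < x) :
    pow (a ++ (m ^ x) :: b ++ [z]) ≤ pow (a ++ m :: b ++ [x * z]) := by
  have hmain : pow ((m ^ x) :: (b ++ [z])) ≤ pow (m :: (b ++ [x * z])) := by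
    simp only [pow]
    set P := pow (b ++ [z]) with hP
    set Q := pow (b ++ [x * z]) with hQ
    have hk : x * P ≤ Q := key b z x
    calc (1 + m ^ x) ^ P - 1 ≤ ((1 + m) ^ x) ^ P - 1 :=
          Nat.sub_le_sub_right (Nat.pow_le_pow_left (head m x hx) P) 1
      _ = (1 + m) ^ (x * P) - 1 := by rw [← pow_mul]
      _ ≤ (1 + m) ^ Q - 1 :=
          Nat.sub_le_sub_right (Nat.pow_le_pow_right (by omega) hk) 1
  have := mono a hmain
  simpa using this

end HOPDA
end

section
/- For all positive integers a_1,…,a_k and b_1,…,b_k (k ≥ 0), pow(a_1,…,a_k) · pow(b_1,…,b_k) ≤ pow(a_1·b_1, …, a_k·b_k). -/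
/-!
Write `f_n(t) = (1 + t) ^ n - 1`. The Bernoulli-type inequality `c * f_n(t) ≤ f_n(c * t)` for
natural `c` gives, applied twice,
`f_P(a) * f_Q(b) ≤ f_P(f_Q(b) * a) ≤ f_P(f_Q(a * b)) = f_{P * Q}(a * b)`,
which is exactly the induction step for `pow` on the heads of the two lists.
-/

namespace HOPDA

theorem mul_one_add_pow_sub_one_le (b c n : ℕ) :
    c * ((1 + b) ^ n - 1) ≤ (1 + c * b) ^ n - 1 := by
  rcases Nat.eq_zero_or_pos c with rfl | hc
  · simp
  induction n with
  | zero => simp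
  | succ n ih =>
    have hx : 1 ≤ (1 + b) ^ n := Nat.one_le_pow _ _ (by omega)
    have hy : 1 ≤ (1 + c * b) ^ n := Nat.one_le_pow _ _ (by omega)
    have hx' : 1 ≤ (1 + b) ^ (n + 1) := Nat.one_le_pow _ _ (by omega)
    have hy' : 1 ≤ (1 + c * b) ^ (n + 1) := Nat.one_le_pow _ _ (by omega)
    zify [hx, hy, hx', hy'] at ih ⊢
    have hb : (0 : ℤ) ≤ b := by positivity
    rw [pow_succ, pow_succ]
    -- after multiplying `ih` by `1 + b`, what remains is `(c - 1) * b * ((1 + c * b) ^ n - 1) ≥ 0`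
    nlinarith [mul_le_mul_of_nonneg_right ih (by positivity : (0 : ℤ) ≤ 1 + b),
      mul_nonneg (mul_nonneg (sub_nonneg.2 (by exact_mod_cast hc : (1 : ℤ) ≤ c)) hb)
        (sub_nonneg.2 (by exact_mod_cast hy : (1 : ℤ) ≤ (1 + c * b) ^ n))]

theorem one_add_pow_sub_one_mul_one_add_pow_sub_one_le_s14 (a b P Q : ℕ) :
    ((1 + a) ^ P - 1) * ((1 + b) ^ Q - 1) ≤ (1 + a * b) ^ (P * Q) - 1 := by
  have hab := mul_one_add_pow_sub_one_le b a Q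
  set c := (1 + b) ^ Q - 1
  have hca : 1 + c * a ≤ (1 + a * b) ^ Q := by
    have := Nat.one_le_pow Q (1 + a * b) (by omega)
    rw [mul_comm c]
    omega
  calc ((1 + a) ^ P - 1) * c = c * ((1 + a) ^ P - 1) := mul_comm _ _
    _ ≤ (1 + c * a) ^ P - 1 := mul_one_add_pow_sub_one_le a c P
    _ ≤ ((1 + a * b) ^ Q) ^ P - 1 := by gcongr
    _ = (1 + a * b) ^ (P * Q) - 1 := by rw [← pow_mul, mul_comm Q]

theorem statement14_general (a b : List ℕ) (hlen : a.length = b.length) :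
    pow a * pow b ≤ pow (List.zipWith (· * ·) a b) := by
  induction a generalizing b with
  | nil => cases b <;> simp_all [pow]
  | cons m a ih =>
    cases b with
    | nil => simp at hlen
    | cons n b =>
      calc pow (m :: a) * pow (n :: b)
          ≤ (1 + m * n) ^ (pow a * pow b) - 1 :=
            one_add_pow_sub_one_mul_one_add_pow_sub_one_le_s14 m n (pow a) (pow b)
        _ ≤ (1 + m * n) ^ pow (List.zipWith (· * ·) a b) - 1 := by
            gcongr
            · omega
            · exact ih b (by simpa using hlen)

/-- For all positive integers `a_1,…,a_k` and `b_1,…,b_k` (`k ≥ 0`),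
`pow(a_1,…,a_k) · pow(b_1,…,b_k) ≤ pow(a_1·b_1, …, a_k·b_k)`. -/
theorem statement14 (a b : List ℕ) (hlen : a.length = b.length)
    (ha : ∀ x ∈ a, 0 < x) (hb : ∀ x ∈ b, 0 < x) :
    pow a * pow b ≤ pow (List.zipWith (· * ·) a b) :=
  statement14_general a b hlen

end HOPDA
end
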